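/- arXiv:1907.06468 — 9 statements merged into one kernel-verified Lean document; each statement's English description precedes it below -/
import Mathlib

section
/- Let $I$ be a monomial ideal in $R = k[x_1,\dots,x_n]$ and let $I^{(t)}$ denote its $t$-th symbolic power. Then $I^{(t)}$ is integrally closed if and only if $I_F^t$ is integrally closed for every minimal prime $P_F$ of $I$, where $I_F$ denotes the $P_F$-primary component of $I$. -/
/-!
In any Noetherian ring, `I^{(t)}` is integrally closed iff each of its components
`satAt (I ^ t) P`, `P` minimal over `I`, is: an intersection of integrally closed ideals is
integrally closed, and conversely an element `m ∉ P` lying in all the other components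
multiplies an equation of integral dependence of `x` over the `P`-component into one of `m * x`
over `I^{(t)}`, while `m * x` in the `P`-component forces `x` into it.

For a monomial ideal `I`, a minimal prime is `P = (x_i : i ∈ F)`, and `satAt I P` contains the
ideal `J` generated by the generators of `I` with the variables outside `F` set to `1`. Every
power `J ^ t` is generated by monomials in the variables of `F`, and such an ideal is saturated
with respect to `P`: compare the least terms of `s ∉ P` and of `x` in an order that ranks
monomials first by their degree in the variables of `F`. Hence `satAt (I ^ t) P = (satAt I P) ^ t`.
-/

open MvPolynomial

/-- A monomial ideal: an ideal generated by a set of monomials. -/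
def IsMonomialIdeal {k : Type*} [Field k] {n : ℕ}
    (I : Ideal (MvPolynomial (Fin n) k)) : Prop :=
  ∃ S : Set (Fin n →₀ ℕ), I = Ideal.span ((fun a => (monomial a (1 : k))) '' S)

/-- The contraction of `J R_P` back to `R`, i.e. the `P`-primary component of `J`
when `P` is a minimal prime of `J`. -/
noncomputable def satAt {R : Type*} [CommRing R] (J P : Ideal R) [P.IsPrime] : Ideal R :=
  Ideal.comap (algebraMap R (Localization.AtPrime P))
    (Ideal.map (algebraMap R (Localization.AtPrime P)) J)

/-- The `t`-th symbolic power of `I`: the intersection of the primary components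
of `I^t` associated with the minimal primes of `I`. -/
noncomputable def symbolicPower {R : Type*} [CommRing R] (I : Ideal R) (t : ℕ) : Ideal R :=
  ⨅ (P : Ideal R) (hP : P ∈ I.minimalPrimes), @satAt R _ (I ^ t) P hP.1.1

/-- An ideal is integrally closed if it contains every element which is integral
over it, i.e. every `x` satisfying an equation
`x^n + a₁ x^{n-1} + ⋯ + aₙ = 0` with `aᵢ ∈ I^i`. -/
def IsIntegrallyClosedIdeal {R : Type*} [CommRing R] (I : Ideal R) : Prop :=
  ∀ x : R, (∃ n : ℕ, 0 < n ∧ ∃ a : ℕ → R,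
      (∀ i, 1 ≤ i → i ≤ n → a i ∈ I ^ i) ∧
      x ^ n + ∑ i ∈ Finset.range n, a (n - i) * x ^ i = 0) → x ∈ I

section IntegralClosure

variable {R : Type*} [CommRing R]

def IsIntegralOverIdeal (J : Ideal R) (x : R) : Prop :=
  ∃ d : ℕ, 0 < d ∧ ∃ a : ℕ → R, (∀ i, 1 ≤ i → i ≤ d → a i ∈ J ^ i) ∧
    x ^ d + ∑ i ∈ Finset.range d, a (d - i) * x ^ i = 0

theorem IsIntegralOverIdeal.mono {J J' : Ideal R} {x : R} (hx : IsIntegralOverIdeal J x)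
    (h : J ≤ J') : IsIntegralOverIdeal J' x := by
  obtain ⟨d, hd, a, ha, heq⟩ := hx
  exact ⟨d, hd, a, fun i h₁ h₂ => Ideal.pow_right_mono h i (ha i h₁ h₂), heq⟩

theorem IsIntegralOverIdeal.mul_left {J : Ideal R} {x : R} (hx : IsIntegralOverIdeal J x)
    (m : R) : IsIntegralOverIdeal (Ideal.span {m} * J) (m * x) := by
  obtain ⟨d, hd, a, ha, heq⟩ := hx
  refine ⟨d, hd, fun i => m ^ i * a i, fun i h₁ h₂ => ?_, ?_⟩
  · rw [mul_pow]
    exact Ideal.mul_mem_mul (Ideal.pow_mem_pow (Ideal.mem_span_singleton_self m) i) (ha i h₁ h₂)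
  · have hterm : ∀ i ∈ Finset.range d,
        m ^ (d - i) * a (d - i) * (m * x) ^ i = m ^ d * (a (d - i) * x ^ i) := by
      intro i hi
      rw [← Nat.sub_add_cancel (Finset.mem_range.mp hi).le, pow_add m]
      simp only [Nat.add_sub_cancel]
      ring
    rw [Finset.sum_congr rfl hterm, ← Finset.mul_sum, mul_pow, ← mul_add, heq, mul_zero]

theorem IsIntegrallyClosedIdeal.iInf {ι : Sort*} {J : ι → Ideal R}
    (h : ∀ i, IsIntegrallyClosedIdeal (J i)) : IsIntegrallyClosedIdeal (⨅ i, J i) :=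
  fun x hx => Submodule.mem_iInf J |>.mpr fun i =>
    h i x (IsIntegralOverIdeal.mono hx (iInf_le J i))

theorem IsIntegrallyClosedIdeal.of_span_singleton_mul_le {J Q : Ideal R}
    (hJ : IsIntegrallyClosedIdeal J) {m : R} (hmQ : Ideal.span {m} * Q ≤ J) (hJQ : J ≤ Q)
    (hQ : ∀ y, m * y ∈ Q → y ∈ Q) : IsIntegrallyClosedIdeal Q :=
  fun x hx => hQ x (hJQ (hJ _ ((IsIntegralOverIdeal.mul_left hx m).mono hmQ)))

end IntegralClosure

section Saturation

variable {R : Type*} [CommRing R]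

theorem mem_satAt {J P : Ideal R} [P.IsPrime] {x : R} :
    x ∈ satAt J P ↔ ∃ s ∉ P, s * x ∈ J := by
  rw [satAt, Ideal.mem_comap,
    ← IsLocalization.mk'_one (M := P.primeCompl) (Localization.AtPrime P) x,
    IsLocalization.mk'_mem_map_algebraMap_iff]
  rfl

theorem mem_satAt_of_mul_mem {J P : Ideal R} [hP : P.IsPrime] {m x : R} (hm : m ∉ P)
    (h : m * x ∈ satAt J P) : x ∈ satAt J P := by
  obtain ⟨s, hs, hsx⟩ := mem_satAt.mp h
  exact mem_satAt.mpr
    ⟨s * m, fun hsm => (hP.mem_or_mem hsm).elim hs hm, mul_assoc s m x ▸ hsx⟩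

theorem satAt_pow_le_satAt_pow (J P : Ideal R) [P.IsPrime] (t : ℕ) :
    satAt J P ^ t ≤ satAt (J ^ t) P := by
  rw [satAt, satAt, Ideal.map_pow]
  exact Ideal.le_comap_pow _ t

theorem radical_satAt_of_mem_minimalPrimes {J P : Ideal R} [P.IsPrime]
    (hP : P ∈ J.minimalPrimes) : (satAt J P).radical = P := by
  rw [satAt, ← Ideal.comap_radical,
    IsLocalization.AtPrime.radical_map_of_mem_minimalPrimes _ P J hP]
  exact IsLocalization.under_map_of_isPrime_disjoint P.primeCompl _ ‹_›
    (Set.disjoint_compl_left_iff_subset.mpr le_rfl)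

theorem le_of_satAt_pow_le {J P Q : Ideal R} [P.IsPrime] [Q.IsPrime]
    (hP : P ∈ J.minimalPrimes) {t : ℕ} (h : satAt (J ^ t) P ≤ Q) : P ≤ Q := by
  rw [← radical_satAt_of_mem_minimalPrimes hP, Ideal.IsPrime.radical_le_iff ‹_›]
  exact Ideal.IsPrime.le_of_pow_le ((satAt_pow_le_satAt_pow J P t).trans h)

end Saturation

section SymbolicPower

variable {R : Type*} [CommRing R] [IsNoetherianRing R]

theorem exists_notMem_forall_mem_satAt_pow {I P₀ : Ideal R} (hP₀ : P₀ ∈ I.minimalPrimes)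
    (t : ℕ) : ∃ m ∉ P₀, ∀ (P : Ideal R) (hP : P ∈ I.minimalPrimes), P ≠ P₀ →
      m ∈ @satAt R _ (I ^ t) P hP.1.1 := by
  classical
  have := hP₀.1.1
  let D := (I.finite_minimalPrimes_of_isNoetherianRing R).toFinset.erase P₀
  let component : Ideal R → Ideal R := fun P =>
    if hP : P ∈ I.minimalPrimes then @satAt R _ (I ^ t) P hP.1.1 else ⊤
  have hD : ¬ D.inf component ≤ P₀ := by
    rw [Ideal.IsPrime.inf_le' ‹_›]
    rintro ⟨P, hPD, hle⟩
    obtain ⟨hne, hP⟩ := Finset.mem_erase.mp hPD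
    rw [Set.Finite.mem_toFinset] at hP
    have := hP.1.1
    simp only [component, dif_pos hP] at hle
    have hPP₀ : P ≤ P₀ := le_of_satAt_pow_le hP hle
    exact hne (le_antisymm hPP₀ (hP₀.2 hP.1 hPP₀))
  obtain ⟨m, hm, hmP₀⟩ := SetLike.not_le_iff_exists.mp hD
  refine ⟨m, hmP₀, fun P hP hne => ?_⟩
  have hPD : P ∈ D := Finset.mem_erase.mpr ⟨hne, (Set.Finite.mem_toFinset _).mpr hP⟩
  simpa only [component, dif_pos hP] using Finset.inf_le (f := component) hPD hm

theorem isIntegrallyClosedIdeal_symbolicPower_iff (I : Ideal R) (t : ℕ) :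
    IsIntegrallyClosedIdeal (symbolicPower I t) ↔
      ∀ (P : Ideal R) (hP : P ∈ I.minimalPrimes),
        IsIntegrallyClosedIdeal (@satAt R _ (I ^ t) P hP.1.1) := by
  refine ⟨fun h P₀ hP₀ => ?_, fun h => .iInf fun P => .iInf fun hP => h P hP⟩
  have := hP₀.1.1
  obtain ⟨m, hmP₀, hm⟩ := exists_notMem_forall_mem_satAt_pow hP₀ t
  refine h.of_span_singleton_mul_le (m := m) (le_iInf₂ fun P hP => ?_) (iInf₂_le P₀ hP₀)
    fun y => mem_satAt_of_mul_mem hmP₀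
  by_cases hPP₀ : P = P₀
  · subst hPP₀
    exact Ideal.mul_le_right
  · exact Ideal.mul_le_left.trans ((Ideal.span_singleton_le_iff_mem _).mpr (hm P hP hPP₀))

end SymbolicPower

namespace MvPolynomial

open scoped Pointwise

variable {σ k : Type*} [CommRing k]

variable (k) in
noncomputable def monomialIdeal (S : Set (σ →₀ ℕ)) : Ideal (MvPolynomial σ k) :=
  Ideal.span ((fun a => monomial a (1 : k)) '' S)

theorem mem_monomialIdeal {S : Set (σ →₀ ℕ)} {x : MvPolynomial σ k} :
    x ∈ monomialIdeal k S ↔ ∀ m ∈ x.support, ∃ a ∈ S, a ≤ m :=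
  mem_ideal_span_monomial_image

theorem monomialIdeal_mul (S T : Set (σ →₀ ℕ)) :
    monomialIdeal k S * monomialIdeal k T = monomialIdeal k (S + T) := by
  rw [monomialIdeal, monomialIdeal, monomialIdeal, Ideal.span_mul_span', ← Set.image2_mul,
    ← Set.image2_add, Set.image2_image_left, Set.image2_image_right, Set.image_image2]
  simp only [monomial_mul, one_mul]

theorem monomialIdeal_pow (S : Set (σ →₀ ℕ)) (t : ℕ) :
    monomialIdeal k S ^ t = monomialIdeal k (t • S) := by
  induction t with
  | zero =>
    rw [pow_zero, zero_nsmul, monomialIdeal, Set.image_zero, monomial_zero',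
      C_1, Ideal.span_singleton_one, Ideal.one_eq_top]
  | succ t ih => rw [pow_succ, succ_nsmul, ih, monomialIdeal_mul]

theorem coeff_mul_add_of_forall_key_le {Γ : Type*} [AddCommMonoid Γ] [LinearOrder Γ]
    [IsOrderedCancelAddMonoid Γ] (key : (σ →₀ ℕ) →+ Γ) (hkey : Function.Injective key)
    {f g : MvPolynomial σ k} {a b : σ →₀ ℕ} (ha : ∀ a' ∈ f.support, key a ≤ key a')
    (hb : ∀ b' ∈ g.support, key b ≤ key b') :
    (f * g).coeff (a + b) = f.coeff a * g.coeff b := by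
  classical
  rw [coeff_mul, Finset.sum_eq_single (a, b) ?_ (by simp)]
  rintro ⟨a', b'⟩ hab hne
  rw [Finset.HasAntidiagonal.mem_antidiagonal] at hab
  by_cases ha' : a' ∈ f.support
  · by_cases hb' : b' ∈ g.support
    · have hsum : key a + key b = key a' + key b' := by rw [← map_add, ← map_add, hab]
      obtain rfl : a' = a := hkey <| le_antisymm (not_lt.mp fun hlt =>
        (add_lt_add_of_lt_of_le hlt (hb b' hb')).ne hsum) (ha a' ha')
      exact absurd (congrArg _ (add_left_cancel hab)) hne
    · rw [notMem_support_iff.mp hb', mul_zero]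
  · rw [notMem_support_iff.mp ha', zero_mul]

theorem exists_le_of_mul_mem_monomialIdeal [NoZeroDivisors k] {F : Set σ}
    {S : Set (σ →₀ ℕ)} (hS : S ⊆ Finsupp.supported ℕ ℕ F) {s p : MvPolynomial σ k}
    (hs : s ∉ Ideal.span (X '' F)) (hp : p ≠ 0) (h : s * p ∈ monomialIdeal k S) :
    ∃ m ∈ p.support, ∃ a ∈ S, a ≤ m := by
  classical
  let _ : LinearOrder σ := IsWellOrder.linearOrder WellOrderingRel
  -- Since `s ∉ Ideal.span (X '' F)`, the least term of `s` for this key is free of `F`.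
  let key : (σ →₀ ℕ) →+ ℕ ×ₗ Lex (σ →₀ ℕ) :=
    { toFun := fun a => toLex ((a.filter (· ∈ F)).degree, toLex a)
      map_zero' := by rw [Finsupp.filter_zero, map_zero]; rfl
      map_add' := fun a b => by simp [Finsupp.filter_add]; rfl }
  have hkey : Function.Injective key := fun a b hab =>
    toLex.injective (Prod.ext_iff.mp (toLex.injective hab)).2
  obtain ⟨c₀, hc₀, hc₀F⟩ : ∃ c₀ ∈ s.support, ∀ i ∈ F, c₀ i = 0 := by
    simpa [mem_ideal_span_X_image] using hs
  obtain ⟨c, hc, hcmin⟩ := s.support.exists_min_image key ⟨c₀, hc₀⟩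
  obtain ⟨m, hm, hmmin⟩ := p.support.exists_min_image key (support_nonempty.mpr hp)
  have hcF : ∀ i ∈ F, c i = 0 := by
    have hdeg : (c.filter (· ∈ F)).degree ≤ (c₀.filter (· ∈ F)).degree :=
      Prod.Lex.monotone_fst _ _ (hcmin c₀ hc₀)
    have hc₀0 : c₀.filter (· ∈ F) = 0 := by
      ext i
      by_cases hi : i ∈ F <;> simp [hi, hc₀F]
    rw [hc₀0, map_zero, Nat.le_zero, Finsupp.degree_eq_zero_iff] at hdeg
    intro i hi
    simpa [hi] using DFunLike.congr_fun hdeg i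
  have hcoeff : (s * p).coeff (c + m) ≠ 0 := by
    rw [coeff_mul_add_of_forall_key_le key hkey hcmin hmmin]
    exact mul_ne_zero (mem_support_iff.mp hc) (mem_support_iff.mp hm)
  obtain ⟨a, haS, hle⟩ := mem_monomialIdeal.mp h (c + m) (mem_support_iff.mpr hcoeff)
  refine ⟨m, hm, a, haS, fun i => ?_⟩
  by_cases hi : i ∈ F
  · simpa [hcF i hi] using hle i
  · have hai : a i = 0 := by
      by_contra hai
      exact hi ((Finsupp.mem_supported ℕ a).mp (hS haS) (Finsupp.mem_support_iff.mpr hai))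
    simp [hai]

theorem mem_monomialIdeal_of_mul_mem [NoZeroDivisors k] {F : Set σ} {S : Set (σ →₀ ℕ)}
    (hS : S ⊆ Finsupp.supported ℕ ℕ F) {s x : MvPolynomial σ k}
    (hs : s ∉ Ideal.span (X '' F)) (h : s * x ∈ monomialIdeal k S) :
    x ∈ monomialIdeal k S := by
  let Good : Set (σ →₀ ℕ) := {m | ∃ a ∈ S, a ≤ m}
  have hsplit : x ∈ restrictSupport k Good ⊔ restrictSupport k Goodᶜ := by
    rw [restrictSupport_eq_span, restrictSupport_eq_span, ← Submodule.span_union,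
      ← Set.image_union, Set.union_compl_self, ← restrictSupport_eq_span]
    exact Set.subset_univ _
  obtain ⟨xg, hxg, xb, hxb, rfl⟩ := Submodule.mem_sup.mp hsplit
  have hxgJ : xg ∈ monomialIdeal k S := mem_monomialIdeal.mpr fun m hm => hxg hm
  refine add_mem hxgJ ?_
  by_cases hxb0 : xb = 0
  · exact hxb0 ▸ zero_mem _
  have hsxb : s * xb ∈ monomialIdeal k S := by
    rw [show s * xb = s * (xg + xb) - s * xg by ring]
    exact Ideal.sub_mem _ h (Ideal.mul_mem_left _ _ hxgJ)
  obtain ⟨m, hm, hgood⟩ := exists_le_of_mul_mem_monomialIdeal hS hs hxb0 hsxb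
  exact absurd hgood (hxb hm)

theorem monomial_notMem_span_X_image [Nontrivial k] {F : Set σ} {a : σ →₀ ℕ}
    (ha : ∀ i ∈ F, a i = 0) : monomial a (1 : k) ∉ Ideal.span (X '' F) := by
  classical
  rw [mem_ideal_span_X_image, support_monomial, if_neg one_ne_zero]
  simpa using ha

theorem isPrime_span_X_image [IsDomain k] (F : Set σ) :
    (Ideal.span (X '' F : Set (MvPolynomial σ k))).IsPrime := by
  classical
  let killF : MvPolynomial σ k →ₐ[k] MvPolynomial σ k :=
    aeval fun i => if i ∈ F then 0 else X i
  suffices RingHom.ker killF = Ideal.span (X '' F) from this ▸ RingHom.ker_isPrime killF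
  refine le_antisymm (fun p hp => ?_) (Ideal.span_le.mpr ?_)
  · have hcomp : (Ideal.Quotient.mkₐ k (Ideal.span (X '' F))).comp killF =
        Ideal.Quotient.mkₐ k _ := by
      refine algHom_ext fun i => ?_
      by_cases hi : i ∈ F
      · simp only [AlgHom.comp_apply, killF, aeval_X, if_pos hi, map_zero]
        exact (Ideal.Quotient.eq_zero_iff_mem.mpr
          (Ideal.subset_span (Set.mem_image_of_mem X hi))).symm
      · simp [killF, hi]
    rw [← Ideal.Quotient.eq_zero_iff_mem, ← Ideal.Quotient.mkₐ_eq_mk k, ← hcomp,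
      AlgHom.comp_apply, RingHom.mem_ker.mp hp, map_zero]
  · rintro _ ⟨i, hi, rfl⟩
    simp [killF, hi]

theorem exists_X_mem_of_monomial_mem {P : Ideal (MvPolynomial σ k)} [hP : P.IsPrime]
    {a : σ →₀ ℕ} (h : monomial a (1 : k) ∈ P) : ∃ i, a i ≠ 0 ∧ X i ∈ P := by
  rw [← prod_X_pow_eq_monomial, hP.prod_mem_iff] at h
  obtain ⟨i, hi, hXi⟩ := h
  exact ⟨i, Finsupp.mem_support_iff.mp hi, hP.mem_of_pow_mem _ hXi⟩

theorem eq_span_X_image_of_mem_minimalPrimes [IsDomain k] {S : Set (σ →₀ ℕ)}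
    {P : Ideal (MvPolynomial σ k)} (hP : P ∈ (monomialIdeal k S).minimalPrimes) :
    P = Ideal.span (X '' {i | X i ∈ P}) := by
  have := hP.1.1
  have hle : Ideal.span (X '' {i | X i ∈ P}) ≤ P := by
    rw [Ideal.span_le]
    rintro _ ⟨i, hi, rfl⟩
    exact hi
  refine le_antisymm (hP.2 ⟨isPrime_span_X_image _, Ideal.span_le.mpr ?_⟩ hle) hle
  rintro _ ⟨a, ha, rfl⟩
  obtain ⟨i, hai, hXi⟩ :=
    exists_X_mem_of_monomial_mem (hP.1.2 (Ideal.subset_span ⟨a, ha, rfl⟩))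
  classical
  rw [SetLike.mem_coe, mem_ideal_span_X_image, support_monomial, if_neg one_ne_zero]
  simpa using ⟨i, hXi, hai⟩

theorem satAt_monomialIdeal_pow [IsDomain k] {S : Set (σ →₀ ℕ)}
    {P : Ideal (MvPolynomial σ k)} [P.IsPrime] (hP : P ∈ (monomialIdeal k S).minimalPrimes)
    (t : ℕ) :
    satAt (monomialIdeal k S ^ t) P = satAt (monomialIdeal k S) P ^ t := by
  classical
  obtain ⟨F, hPF⟩ : ∃ F : Set σ, P = Ideal.span (X '' F) :=
    ⟨_, eq_span_X_image_of_mem_minimalPrimes hP⟩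
  have hfactor (a : σ →₀ ℕ) :
      monomial (a.filter (· ∉ F)) (1 : k) * monomial (a.filter (· ∈ F)) 1 = monomial a 1 := by
    rw [monomial_mul, one_mul, add_comm, Finsupp.filter_add_filter_not]
  have hcofactor (a : σ →₀ ℕ) : monomial (a.filter (· ∉ F)) (1 : k) ∉ P :=
    fun h => monomial_notMem_span_X_image (fun i hi => by simp [hi]) (hPF ▸ h)
  set J := monomialIdeal k ((Finsupp.filter (· ∈ F)) '' S)
  have hIJ : monomialIdeal k S ≤ J := by
    refine Ideal.span_le.mpr ?_
    rintro _ ⟨a, ha, rfl⟩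
    show monomial a 1 ∈ J
    rw [← hfactor a]
    exact Ideal.mul_mem_left _ _ (Ideal.subset_span ⟨_, ⟨a, ha, rfl⟩, rfl⟩)
  have hJ : J ≤ satAt (monomialIdeal k S) P := by
    refine Ideal.span_le.mpr ?_
    rintro _ ⟨_, ⟨a, ha, rfl⟩, rfl⟩
    exact mem_satAt.mpr ⟨_, hcofactor a, hfactor a ▸ Ideal.subset_span ⟨a, ha, rfl⟩⟩
  have hJsupp : t • ((Finsupp.filter (· ∈ F)) '' S) ⊆ Finsupp.supported ℕ ℕ F := by
    refine AddSubmonoid.nsmul_subset (S := (Finsupp.supported ℕ ℕ F).toAddSubmonoid) ?_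
    rintro _ ⟨a, -, rfl⟩
    exact (Finsupp.mem_supported ℕ _).mpr fun i hi =>
      (Finset.mem_filter.mp (Finsupp.support_filter (· ∈ F) a ▸ hi)).2
  refine le_antisymm (fun x hx => ?_) (satAt_pow_le_satAt_pow _ _ t)
  obtain ⟨s, hs, hsx⟩ := mem_satAt.mp hx
  have hsxJ := Ideal.pow_right_mono hIJ t hsx
  have hxJ : x ∈ J ^ t := by
    rw [monomialIdeal_pow] at hsxJ ⊢
    exact mem_monomialIdeal_of_mul_mem hJsupp (hPF ▸ hs) hsxJ
  exact Ideal.pow_right_mono hJ t hxJ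

end MvPolynomial

theorem stmt3_general {k : Type*} [Field k] {n : ℕ}
    (I : Ideal (MvPolynomial (Fin n) k)) (hmon : IsMonomialIdeal I)
    (t : ℕ) :
    IsIntegrallyClosedIdeal (symbolicPower I t) ↔
      ∀ (P : Ideal (MvPolynomial (Fin n) k)) (hP : P ∈ I.minimalPrimes),
        IsIntegrallyClosedIdeal ((@satAt _ _ I P hP.1.1) ^ t) := by
  obtain ⟨S, rfl⟩ := hmon
  rw [isIntegrallyClosedIdeal_symbolicPower_iff]
  refine forall₂_congr fun P hP => ?_
  have := hP.1.1
  exact iff_of_eq (congrArg _ (MvPolynomial.satAt_monomialIdeal_pow hP t))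

/-- **Integral closedness of symbolic powers of monomial ideals.**
For a monomial ideal `I`, the symbolic power `I^{(t)}` is integrally closed if
and only if `I_F^t` is integrally closed for every minimal prime `P_F` of `I`,
where `I_F` denotes the `P_F`-primary component of `I`. -/
theorem stmt3 {k : Type*} [Field k] {n : ℕ}
    (I : Ideal (MvPolynomial (Fin n) k)) (hmon : IsMonomialIdeal I)
    (t : ℕ) (ht : 1 ≤ t) :
    IsIntegrallyClosedIdeal (symbolicPower I t) ↔
      ∀ (P : Ideal (MvPolynomial (Fin n) k)) (hP : P ∈ I.minimalPrimes),
        IsIntegrallyClosedIdeal ((@satAt _ _ I P hP.1.1) ^ t) :=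
  stmt3_general I hmon t
end

section
/- Let $m \ge 2$ be an integer and consider the monomial ideals $M = (x^{2m-2}, y^m, z^{2m})^2$, $P = (x^{2m-1}, y^{2m-1})$, and $Q = (z)$ in $k[x,y,z]$. Then $M^t \subseteq P^t + Q^t$ if and only if $t \ge m$. -/
/-!
All three ideals are monomial ideals, so the containment is decided on generators.
A generator `x^{(2m-2)a} y^{mb} z^{2mc}` of `M^t` (with `a + b + c = 2t`) lies in `Q^t` when
`2mc ≥ t`; otherwise `z` contributes little and the exponents of `x` and `y` are large enough to
be split as `(2m-1)i` and `(2m-1)j` with `i + j = t`, provided `t ≥ m`.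
Conversely, for `t < m` the generator `x^{2m-2} y^{m(2t-1)}` of `M^t` is divisible by no
generator of `P^t + Q^t`: its `x`-exponent forces `i = 0`, and then `(2m-1)t ≤ m(2t-1)`
says `m ≤ t`.
-/

open MvPolynomial

namespace Ideal

variable {R : Type*} [CommSemiring R]

theorem mul_le_iff_le_colon {I J K : Ideal R} : I * J ≤ K ↔ I ≤ K.colon (J : Set R) := by
  rw [Ideal.mul_le]
  simp only [SetLike.le_def, Submodule.mem_colon, smul_eq_mul, SetLike.mem_coe]

theorem sup_pow_le_iff {I J K : Ideal R} {n : ℕ} :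
    (I ⊔ J) ^ n ≤ K ↔ ∀ i j, i + j = n → I ^ i * J ^ j ≤ K := by
  refine ⟨fun h i j hij => ?_, fun h => ?_⟩
  · rw [← hij, pow_add] at h
    exact (mul_le_mul' (pow_le_pow_left' le_sup_left i) (pow_le_pow_left' le_sup_right j)).trans h
  induction n generalizing K with
  | zero => simpa using h 0 0 rfl
  | succ n ih =>
    have mul_le_of (L : Ideal R) (hL : ∀ i j, i + j = n → I ^ i * J ^ j * L ≤ K) :
        (I ⊔ J) ^ n * L ≤ K :=
      mul_le_iff_le_colon.2 <| ih fun i j hij => mul_le_iff_le_colon.1 (hL i j hij)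
    rw [pow_succ, mul_sup, sup_le_iff]
    refine ⟨mul_le_of I fun i j hij => ?_, mul_le_of J fun i j hij => ?_⟩
    · simpa only [mul_right_comm, ← pow_succ] using h (i + 1) j (by omega)
    · simpa only [mul_assoc, ← pow_succ] using h i (j + 1) (by omega)

theorem span_pair_pow_le_iff {u v : R} {K : Ideal R} {n : ℕ} :
    span {u, v} ^ n ≤ K ↔ ∀ i j, i + j = n → u ^ i * v ^ j ∈ K := by
  simp only [span_insert, sup_pow_le_iff, span_singleton_pow, span_singleton_mul_span_singleton,
    span_singleton_le_iff_mem]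

theorem span_triple_pow_le_iff {u v w : R} {K : Ideal R} {n : ℕ} :
    span {u, v, w} ^ n ≤ K ↔ ∀ i j l, i + j + l = n → u ^ i * v ^ j * w ^ l ∈ K := by
  simp only [span_insert u, sup_pow_le_iff, span_singleton_pow, mul_comm (span {_}),
    mul_le_iff_le_colon, colon_span, span_pair_pow_le_iff, Submodule.mem_colon_singleton,
    smul_eq_mul]
  constructor
  · rintro h i j l rfl
    simpa only [mul_comm, mul_left_comm, mul_assoc] using h i (j + l) (by omega) j l rfl
  · rintro h i _ hij j l rfl
    simpa only [mul_comm, mul_left_comm, mul_assoc] using h i j l (by omega)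

end Ideal

theorem MvPolynomial.monomial_one_mem_span_monomial_one_image_iff {σ R : Type*}
    [CommSemiring R] [Nontrivial R] {a : σ →₀ ℕ} {s : Set (σ →₀ ℕ)} :
    monomial a (1 : R) ∈ Ideal.span ((fun b => monomial b (1 : R)) '' s) ↔
      ∃ b ∈ s, b ≤ a := by
  classical
  rw [mem_ideal_span_monomial_image, support_monomial, if_neg one_ne_zero]
  simp

theorem exists_add_eq_mul_le {m t a b c : ℕ} (hm : 2 ≤ m) (hmt : m ≤ t)
    (habc : a + b + c = 2 * t) (hc : 2 * m * c < t) :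
    ∃ i j, i + j = t ∧ (2 * m - 1) * i ≤ (2 * m - 2) * a ∧ (2 * m - 1) * j ≤ m * b := by
  obtain ⟨n, rfl⟩ : ∃ n, m = n + 2 := ⟨m - 2, by omega⟩
  rw [show 2 * (n + 2) - 1 = 2 * n + 3 by omega, show 2 * (n + 2) - 2 = 2 * n + 2 by omega]
  by_cases hat : (2 * n + 3) * t ≤ (2 * n + 2) * a
  · exact ⟨t, 0, rfl, hat, by simp⟩
  -- otherwise take the largest admissible `i`, namely `⌊(2m-2)a / (2m-1)⌋`
  obtain ⟨q, hq_le, hq_lt⟩ : ∃ q, (2 * n + 3) * q ≤ (2 * n + 2) * a ∧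
      (2 * n + 2) * a < (2 * n + 3) * (q + 1) :=
    ⟨_, Nat.mul_div_le _ _, Nat.lt_mul_div_succ _ (by omega)⟩
  have hqt : q < t := Nat.lt_of_mul_lt_mul_left (a := 2 * n + 3) (by omega)
  obtain ⟨j, rfl⟩ : ∃ j, t = q + j := ⟨t - q, by omega⟩
  refine ⟨q, j, rfl, hq_le, ?_⟩
  have hmc : (n + 2) * c + (n + 2) ≤ q + j := by
    rcases Nat.eq_zero_or_pos c with rfl | hc0
    · simpa using hmt
    · nlinarith
  rcases Nat.eq_zero_or_pos a with rfl | ha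
  · obtain rfl : q = 0 := by simpa using hq_le
    nlinarith
  · nlinarith

open Ideal

theorem span_pow_le_span_pow_add_span_pow {R : Type*} [CommSemiring R] (x y z : R) {m t : ℕ}
    (hm : 2 ≤ m) (hmt : m ≤ t) :
    (span {x ^ (2 * m - 2), y ^ m, z ^ (2 * m)} ^ 2) ^ t ≤
      span {x ^ (2 * m - 1), y ^ (2 * m - 1)} ^ t + span {z} ^ t := by
  rw [← pow_mul, span_triple_pow_le_iff]
  intro a b c habc
  simp only [← pow_mul]
  rcases lt_or_ge (2 * m * c) t with hc | hc
  · obtain ⟨i, j, hij, hi, hj⟩ := exists_add_eq_mul_le hm hmt (by omega) hc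
    refine mem_sup_left (mem_of_dvd _ ?_ (span_pair_pow_le_iff.1 le_rfl i j hij))
    rw [← pow_mul, ← pow_mul]
    exact dvd_mul_of_dvd_left (mul_dvd_mul (pow_dvd_pow _ hi) (pow_dvd_pow _ hj)) _
  · exact mem_sup_right (mem_of_dvd _ (dvd_mul_of_dvd_right (pow_dvd_pow z hc) _)
      (pow_mem_pow (mem_span_singleton_self z) t))

theorem span_pow_add_span_pow_le_span_monomial (R : Type*) [CommSemiring R] (p t : ℕ) :
    span {(X 0 : MvPolynomial (Fin 3) R) ^ p, X 1 ^ p} ^ t + span {X 2} ^ t ≤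
      span ((fun e => monomial e (1 : R)) ''
        ({e | ∃ i j, i + j = t ∧ e = .single 0 (p * i) + .single 1 (p * j)} ∪
          {.single 2 t})) := by
  refine sup_le (span_pair_pow_le_iff.2 fun i j hij =>
    subset_span ⟨_, .inl ⟨i, j, hij, rfl⟩, ?_⟩) ?_
  · rw [← pow_mul, ← pow_mul, X_pow_eq_monomial, X_pow_eq_monomial, monomial_mul, one_mul]
  · rw [span_singleton_pow, span_singleton_le_iff_mem, X_pow_eq_monomial]
    exact subset_span ⟨_, .inr rfl, rfl⟩

theorem le_of_pow_le_span_pow_add_span_pow {R : Type*} [CommSemiring R] [Nontrivial R]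
    {m t : ℕ} (ht : 1 ≤ t)
    (h : (span {(X 0 : MvPolynomial (Fin 3) R) ^ (2 * m - 2), X 1 ^ m, X 2 ^ (2 * m)} ^ 2) ^ t ≤
      span {(X 0 : MvPolynomial (Fin 3) R) ^ (2 * m - 1), X 1 ^ (2 * m - 1)} ^ t +
        span {X 2} ^ t) :
    m ≤ t := by
  have hw : monomial (.single 0 (2 * m - 2) + .single 1 (m * (2 * t - 1))) (1 : R) ∈
      (span {(X 0 : MvPolynomial (Fin 3) R) ^ (2 * m - 2), X 1 ^ m, X 2 ^ (2 * m)} ^ 2) ^ t := by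
    rw [← one_mul (1 : R), ← monomial_mul, ← X_pow_eq_monomial, ← X_pow_eq_monomial,
      ← pow_mul, show (X 0 : MvPolynomial (Fin 3) R) ^ (2 * m - 2) * X 1 ^ (m * (2 * t - 1)) =
        (X 0 ^ (2 * m - 2)) ^ 1 * (X 1 ^ m) ^ (2 * t - 1) * (X 2 ^ (2 * m)) ^ 0 by
      simp only [pow_one, pow_zero, mul_one, ← pow_mul]]
    exact span_triple_pow_le_iff.1 le_rfl _ _ _ (by omega)
  obtain ⟨s, hs, hle⟩ := monomial_one_mem_span_monomial_one_image_iff.1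
    (span_pow_add_span_pow_le_span_monomial R _ t (h hw))
  rcases hs with ⟨i, j, hij, rfl⟩ | rfl
  · have h0 := hle 0
    have h1 := hle 1
    simp only [Finsupp.add_apply, Finsupp.single_eq_same, Finsupp.single_eq_of_ne,
      ne_eq, Fin.reduceEq, not_false_eq_true, add_zero, zero_add] at h0 h1
    rcases Nat.eq_zero_or_pos m with rfl | hm
    · exact Nat.zero_le t
    obtain rfl : i = 0 := by
      by_contra hi
      have := Nat.le_mul_of_pos_right (2 * m - 1) (Nat.pos_of_ne_zero hi)
      omega
    rw [show j = t by omega] at h1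
    zify [show 1 ≤ 2 * m by omega, show 1 ≤ 2 * t by omega] at h1
    nlinarith
  · have h2 := hle 2
    simp only [Finsupp.add_apply, Finsupp.single_eq_same, Finsupp.single_eq_of_ne,
      ne_eq, Fin.reduceEq, not_false_eq_true, add_zero] at h2
    omega

/-- **Lemma for type A symbolic depth functions.**  In `k[x,y,z]` with
`M = (x^{2m-2}, y^m, z^{2m})^2`, `P = (x^{2m-1}, y^{2m-1})` and `Q = (z)`,
one has `M^t ⊆ P^t + Q^t` if and only if `t ≥ m`. -/
theorem stmt5 {k : Type*} [Field k] (m t : ℕ) (hm : 2 ≤ m) (ht : 1 ≤ t)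
    (M P Q : Ideal (MvPolynomial (Fin 3) k))
    (hM : M = (Ideal.span {(X 0 : MvPolynomial (Fin 3) k) ^ (2*m-2),
      X 1 ^ m, X 2 ^ (2*m)}) ^ 2)
    (hP : P = Ideal.span {(X 0 : MvPolynomial (Fin 3) k) ^ (2*m-1), X 1 ^ (2*m-1)})
    (hQ : Q = Ideal.span {(X 2 : MvPolynomial (Fin 3) k)}) :
    M ^ t ≤ P ^ t + Q ^ t ↔ m ≤ t := by
  subst hM hP hQ
  exact ⟨le_of_pow_le_span_pow_add_span_pow ht, span_pow_le_span_pow_add_span_pow _ _ _ hm⟩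
end

section
/- Let $m \ge 1$ be an integer and consider the monomial ideals $M = (x^{2m}, y^{2m}, x y^{m-1} z, z^{2m})^2$, $P = (x^m, y^m)$, and $Q = (z^{2m+2})$ in $k[x,y,z]$. Then $M^t \subseteq P^t + Q^t$ if and only if $t = m$. -/
/-!
All ideals involved are monomial, so membership of `x^a y^b z^c` in `P^t + Q^t` is read off the
exponents: either `(2m+2)t ≤ c`, or `(a, b)` dominates `(m i, m j)` for some `i + j = t`.
Write `M = J^2`, so that `M^t = J^{2t}`.

For `t = m`, a product of `2m` generators of `J` with more than `m` factors `z^{2m}` lies in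
`Q^m`; otherwise its `x`- and `y`-exponents `2ma + c`, `2mb + (m-1)c` with `a + b + c ≥ m`
dominate some `(m i, m j)` with `i + j = m`.

For `t ≠ m`, take `(x y^{m-1} z)^c (z^{2m})^d ∈ J^{2t}` with `c + d = 2t` and `c ≤ t`. Its
`z`-exponent is below `(2m+2)t` as soon as `(2m-1)(t-c) < t`, while `x^c y^{(m-1)c} ∈ P^t`
forces `c = t` and `m ∣ t`. So `c = t` works when `m ∤ t`, and `c = t - 1` when `m ∣ t`, since
then `t ≥ 2m`.
-/

open MvPolynomial Pointwise

theorem Set.exists_prod_pow_eq_of_mem_range_pow {ι M : Type*} [Fintype ι] [DecidableEq ι]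
    [CommMonoid M] {g : ι → M} {n : ℕ} {p : M} (hp : p ∈ Set.range g ^ n) :
    ∃ e : ι → ℕ, ∑ i, e i = n ∧ ∏ i, g i ^ e i = p := by
  induction n generalizing p with
  | zero => exact ⟨0, by simp, by simpa [eq_comm] using hp⟩
  | succ n ih =>
    obtain ⟨q, hq, _, ⟨j, rfl⟩, rfl⟩ := hp
    obtain ⟨e, he, rfl⟩ := ih hq
    refine ⟨e + Pi.single j 1, by simp [Finset.sum_add_distrib, he], ?_⟩
    simp only [Pi.add_apply, pow_add, Finset.prod_mul_distrib]
    congr 1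
    simp [Pi.single_apply, pow_ite]

theorem Ideal.span_range_pow_le {ι R : Type*} [Fintype ι] [CommSemiring R] {g : ι → R} {n : ℕ}
    {I : Ideal R} (h : ∀ e : ι → ℕ, ∑ i, e i = n → ∏ i, g i ^ e i ∈ I) :
    Ideal.span (Set.range g) ^ n ≤ I := by
  classical
  rw [Ideal.span, Submodule.span_pow, Submodule.span_le]
  intro p hp
  obtain ⟨e, he, rfl⟩ := Set.exists_prod_pow_eq_of_mem_range_pow hp
  exact h e he

theorem Nat.eq_of_add_eq_of_mul_le_of_mul_pred_le {m t i j c : ℕ} (hm : 1 ≤ m) (hij : i + j = t)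
    (hi : m * i ≤ c) (hj : m * j ≤ (m - 1) * c) (hc : c ≤ t) : c = t ∧ m * i = t := by
  obtain ⟨k, rfl⟩ : ∃ k, m = k + 1 := ⟨m - 1, by omega⟩
  simp only [Nat.add_sub_cancel] at hj
  subst hij
  constructor <;> nlinarith

namespace MvPolynomial

variable {R : Type*} [CommSemiring R]

theorem monomial_mem_ideal_span_monomial_image [Nontrivial R] {σ : Type*} {ν : σ →₀ ℕ}
    {s : Set (σ →₀ ℕ)} (h : monomial ν (1 : R) ∈ Ideal.span ((fun s => monomial s 1) '' s)) :
    ∃ si ∈ s, si ≤ ν := by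
  classical
  exact mem_ideal_span_monomial_image.mp h ν (by simp [support_monomial])

theorem X_pow_mul_X_pow_mul_X_pow_eq_monomial (a b c : ℕ) :
    (X 0 ^ a * X 1 ^ b * X 2 ^ c : MvPolynomial (Fin 3) R) =
      monomial (Finsupp.single 0 a + Finsupp.single 1 b + Finsupp.single 2 c) 1 := by
  simp only [X_pow_eq_monomial, monomial_mul, one_mul]

theorem span_pow_add_span_pow_le_span_monomial_image (m n t : ℕ) :
    Ideal.span {(X 0 : MvPolynomial (Fin 3) R) ^ m, X 1 ^ m} ^ t + Ideal.span {X 2 ^ n} ^ t ≤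
      Ideal.span ((fun s => monomial s 1) '' {ν | (∃ i j, i + j = t ∧
        ν = Finsupp.single 0 (m * i) + Finsupp.single 1 (m * j) + Finsupp.single 2 0) ∨
          ν = Finsupp.single 0 0 + Finsupp.single 1 0 + Finsupp.single 2 (n * t)}) := by
  refine sup_le ?_ ?_
  · rw [← Matrix.range_cons_cons_empty _ _ ![]]
    refine Ideal.span_range_pow_le fun e he =>
      Ideal.subset_span ⟨_, Or.inl ⟨e 0, e 1, by simpa [Fin.sum_univ_two] using he, rfl⟩, ?_⟩
    dsimp only
    rw [Fin.prod_univ_two, ← X_pow_mul_X_pow_mul_X_pow_eq_monomial]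
    simp only [Matrix.cons_val_zero, Matrix.cons_val_one]
    ring
  · rw [Ideal.span_singleton_pow, Ideal.span_singleton_le_iff_mem]
    refine Ideal.subset_span ⟨_, Or.inr rfl, ?_⟩
    dsimp only
    rw [← X_pow_mul_X_pow_mul_X_pow_eq_monomial]
    ring

theorem X_pow_mul_X_pow_mul_X_pow_mem_iff [Nontrivial R] (m n t a b c : ℕ) :
    (X 0 ^ a * X 1 ^ b * X 2 ^ c : MvPolynomial (Fin 3) R) ∈
        Ideal.span {X 0 ^ m, X 1 ^ m} ^ t + Ideal.span {X 2 ^ n} ^ t ↔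
      (∃ i j, i + j = t ∧ m * i ≤ a ∧ m * j ≤ b) ∨ n * t ≤ c := by
  constructor
  · intro h
    replace h := span_pow_add_span_pow_le_span_monomial_image m n t h
    rw [X_pow_mul_X_pow_mul_X_pow_eq_monomial] at h
    obtain ⟨ν, (⟨i, j, hij, rfl⟩ | rfl), hν⟩ := monomial_mem_ideal_span_monomial_image h
    · exact Or.inl ⟨i, j, hij, by simpa using hν 0, by simpa using hν 1⟩
    · exact Or.inr (by simpa using hν 2)
  · rintro (⟨i, j, rfl, hi, hj⟩ | hc)
    · have hij : ((X 0 : MvPolynomial (Fin 3) R) ^ m) ^ i * (X 1 ^ m) ^ j ∈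
          Ideal.span {X 0 ^ m, X 1 ^ m} ^ (i + j) := by
        rw [pow_add]
        exact Ideal.mul_mem_mul (Ideal.pow_mem_pow (Ideal.subset_span (Set.mem_insert _ _)) i)
          (Ideal.pow_mem_pow (Ideal.subset_span (Set.mem_insert_of_mem _ (Set.mem_singleton _))) j)
      refine Submodule.mem_sup_left (Ideal.mem_of_dvd _ ?_ hij)
      rw [← pow_mul, ← pow_mul]
      exact (mul_dvd_mul (pow_dvd_pow _ hi) (pow_dvd_pow _ hj)).mul_right _
    · refine Submodule.mem_sup_right ?_
      rw [Ideal.span_singleton_pow, Ideal.mem_span_singleton, ← pow_mul]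
      exact Dvd.dvd.mul_left (pow_dvd_pow _ hc) _

theorem pow_mul_pow_mul_pow_mul_pow_mem_of_add_eq [Nontrivial R] {m a b c d : ℕ} (hm : 1 ≤ m)
    (h : a + b + c + d = 2 * m) :
    ((X 0 : MvPolynomial (Fin 3) R) ^ (2 * m)) ^ a * (X 1 ^ (2 * m)) ^ b *
        (X 0 * X 1 ^ (m - 1) * X 2) ^ c * (X 2 ^ (2 * m)) ^ d ∈
      Ideal.span {X 0 ^ m, X 1 ^ m} ^ m + Ideal.span {X 2 ^ (2 * m + 2)} ^ m := by
  rw [show ((X 0 : MvPolynomial (Fin 3) R) ^ (2 * m)) ^ a * (X 1 ^ (2 * m)) ^ b *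
      (X 0 * X 1 ^ (m - 1) * X 2) ^ c * (X 2 ^ (2 * m)) ^ d =
      X 0 ^ (2 * m * a + c) * X 1 ^ (2 * m * b + (m - 1) * c) * X 2 ^ (c + 2 * m * d) by ring,
    X_pow_mul_X_pow_mul_X_pow_mem_iff]
  rcases le_or_gt (m + 1) d with hd | hd
  · exact Or.inr (by nlinarith)
  left
  obtain ⟨q, r, hr, rfl⟩ : ∃ q r, r < m ∧ c = m * q + r :=
    ⟨c / m, c % m, Nat.mod_lt _ hm, (Nat.div_add_mod c m).symm⟩
  obtain ⟨k, rfl⟩ : ∃ k, m = k + 1 := ⟨m - 1, by omega⟩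
  simp only [Nat.add_sub_cancel]
  rcases le_or_gt (k + 1) (2 * a + q) with hs | hs
  · exact ⟨k + 1, 0, rfl, by nlinarith, by simp⟩
  obtain ⟨j, hj⟩ : ∃ j, k + 1 = 2 * a + q + j := ⟨k + 1 - (2 * a + q), by omega⟩
  refine ⟨2 * a + q, j, hj.symm, by nlinarith, ?_⟩
  rcases Nat.eq_zero_or_pos q with rfl | hq
  · have hab : k + 1 ≤ a + b + r := by omega
    nlinarith
  · nlinarith

theorem exists_pow_mul_pow_notMem [Nontrivial R] {m t : ℕ} (hm : 1 ≤ m) (ht : 1 ≤ t)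
    (hne : t ≠ m) : ∃ c d, c + d = 2 * t ∧
      ((X 0 : MvPolynomial (Fin 3) R) * X 1 ^ (m - 1) * X 2) ^ c * (X 2 ^ (2 * m)) ^ d ∉
        Ideal.span {X 0 ^ m, X 1 ^ m} ^ t + Ideal.span {X 2 ^ (2 * m + 2)} ^ t := by
  suffices ∃ c d, c + d = 2 * t ∧ c ≤ t ∧ (c = t → ¬ m ∣ t) ∧ c + 2 * m * d < (2 * m + 2) * t by
    obtain ⟨c, d, hcd, hct, hdvd, hz⟩ := this
    refine ⟨c, d, hcd, ?_⟩
    rw [show ((X 0 : MvPolynomial (Fin 3) R) * X 1 ^ (m - 1) * X 2) ^ c * (X 2 ^ (2 * m)) ^ d =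
        X 0 ^ c * X 1 ^ ((m - 1) * c) * X 2 ^ (c + 2 * m * d) by ring,
      X_pow_mul_X_pow_mul_X_pow_mem_iff]
    rintro (⟨i, j, hij, hi, hj⟩ | hz')
    · obtain ⟨rfl, hi⟩ := Nat.eq_of_add_eq_of_mul_le_of_mul_pred_le hm hij hi hj hct
      exact hdvd rfl ⟨i, hi.symm⟩
    · omega
  by_cases hdvd : m ∣ t
  · obtain ⟨u, rfl⟩ := hdvd
    have hu : 2 ≤ u := by
      by_contra! hu
      interval_cases u <;> simp_all
    obtain ⟨s, hs⟩ : ∃ s, m * u = s + 1 := ⟨m * u - 1, by omega⟩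
    refine ⟨s, s + 2, by omega, by omega, by omega, ?_⟩
    nlinarith
  · exact ⟨t, t, by ring, le_rfl, fun _ => hdvd, by nlinarith⟩

end MvPolynomial

/-- **Lemma for type B symbolic depth functions.**  In `k[x,y,z]` with
`M = (x^{2m}, y^{2m}, x y^{m-1} z, z^{2m})^2`, `P = (x^m, y^m)` and
`Q = (z^{2m+2})`, one has `M^t ⊆ P^t + Q^t` if and only if `t = m`. -/
theorem stmt6 {k : Type*} [Field k] (m t : ℕ) (hm : 1 ≤ m) (ht : 1 ≤ t)
    (M P Q : Ideal (MvPolynomial (Fin 3) k))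
    (hM : M = (Ideal.span {(X 0 : MvPolynomial (Fin 3) k) ^ (2*m),
      X 1 ^ (2*m), X 0 * X 1 ^ (m-1) * X 2, X 2 ^ (2*m)}) ^ 2)
    (hP : P = Ideal.span {(X 0 : MvPolynomial (Fin 3) k) ^ m, X 1 ^ m})
    (hQ : Q = Ideal.span {(X 2 : MvPolynomial (Fin 3) k) ^ (2*m+2)}) :
    M ^ t ≤ P ^ t + Q ^ t ↔ t = m := by
  subst hM hP hQ
  rw [← pow_mul]
  constructor
  · intro hle
    by_contra hne
    obtain ⟨c, d, hcd, hnotMem⟩ := exists_pow_mul_pow_notMem (R := k) hm ht hne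
    refine hnotMem (hle ?_)
    rw [mul_comm, ← hcd, pow_add]
    exact Ideal.mul_mem_mul (Ideal.pow_mem_pow (Ideal.subset_span (by simp)) c)
      (Ideal.pow_mem_pow (Ideal.subset_span (by simp)) d)
  · rintro rfl
    rw [← Matrix.range_cons_cons_empty _ _ ![], Set.insert_eq, Set.insert_eq,
      ← Matrix.range_cons, ← Matrix.range_cons]
    refine Ideal.span_range_pow_le fun e he => ?_
    simp only [Fin.sum_univ_four, Fin.prod_univ_four] at he ⊢
    exact pow_mul_pow_mul_pow_mul_pow_mem_of_add_eq hm he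
end

section
/- Let $m \ge 2$ be an integer and consider the monomial ideals $M = (x^{2m-2}, y^m, z^m)^2$, $P = (x^{2m-1}, y^{2m-1})$, and $Q = (z)$ in $k[x,y,z]$. Then $M^t \subseteq P^t + Q^t$ if and only if $t$ is divisible by $m$. -/
/-!
All ideals involved are monomial ideals generated by powers of variables, so the containment
reduces to exponent arithmetic: the generator `x^((2m-2)a) y^(mb) z^(mc)` (`a + b + c = 2t`)
of `M^t` lies in `P^t + Q^t` iff `t ≤ mc` or `⌊(2m-2)a/(2m-1)⌋ + ⌊mb/(2m-1)⌋ ≥ t`.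
If `t = ms` and `c < s`, then `a + b > (2m-1)s`, which forces the second inequality.
If `t = mc + r` with `0 < r < m`, the generator with `a = 1`, `b = 2t - c - 1` satisfies neither.
-/

open MvPolynomial Finsupp

theorem Nat.exists_add_eq_mul_le_of_lt {m n s a b : ℕ} (hmn : m < n) (h : n * s < a + b) :
    ∃ i j, i + j = m * s ∧ i * n ≤ a * (n - 1) ∧ j * n ≤ b * m := by
  obtain ⟨p, rfl⟩ : ∃ p, n = p + 1 := ⟨n - 1, by omega⟩
  rw [Nat.add_sub_cancel]
  -- `q = ⌈a/n⌉`; the `x`-part of the split is `a - q = ⌊(n-1)a/n⌋`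
  obtain ⟨q, hq_le, hq_lt⟩ : ∃ q, a ≤ q * (p + 1) ∧ q * (p + 1) < a + (p + 1) := by
    refine ⟨(a + p) / (p + 1), ?_, ?_⟩
    · have := Nat.div_add_mod (a + p) (p + 1)
      have := Nat.mod_lt (a + p) p.succ_pos
      nlinarith
    · have := Nat.div_mul_le_self (a + p) (p + 1)
      omega
  have hqa : q ≤ a := by
    by_contra! hc
    nlinarith
  obtain ⟨i, rfl⟩ : ∃ i, a = i + q := ⟨a - q, by omega⟩
  rcases le_total (m * s) i with hi | hi
  · exact ⟨m * s, 0, by simp, by nlinarith, by simp⟩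
  · obtain ⟨j, hj⟩ : ∃ j, i + j = m * s := ⟨m * s - i, by omega⟩
    refine ⟨i, j, hj, by nlinarith, ?_⟩
    rcases Nat.eq_zero_or_pos (i + q) with ha | ha
    · nlinarith
    · nlinarith [Nat.mul_le_mul (show m ≤ p by omega) (show 1 ≤ i + q from ha)]

theorem Finsupp.sum_single_mul_apply {σ : Type*} (d : σ → ℕ) (k : σ →₀ ℕ) (i : σ) :
    (k.sum fun j c => single j (c * d j)) i = k i * d i := by
  classical
  rw [Finsupp.sum_apply, Finsupp.sum_eq_single i, single_eq_same]
  · exact fun j _ hji => single_eq_of_ne hji.symm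
  · simp

namespace MvPolynomial

variable {σ R : Type*} [CommSemiring R]

def IsMonomialIdeal (I : Ideal (MvPolynomial σ R)) : Prop :=
  ∃ S : Set (σ →₀ ℕ), I = Ideal.span ((monomial · 1) '' S)

theorem monomial_mem_span_monomial_iff [Nontrivial R] {S : Set (σ →₀ ℕ)} {e : σ →₀ ℕ} :
    monomial e (1 : R) ∈ Ideal.span ((monomial · 1) '' S) ↔ ∃ s ∈ S, s ≤ e := by
  classical
  simp [mem_ideal_span_monomial_image, support_monomial]

namespace IsMonomialIdeal

variable {I J : Ideal (MvPolynomial σ R)}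

theorem le_iff (hI : IsMonomialIdeal I) :
    I ≤ J ↔ ∀ e, monomial e (1 : R) ∈ I → monomial e 1 ∈ J := by
  obtain ⟨S, rfl⟩ := hI
  refine ⟨fun h _ he => h he, fun h => Ideal.span_le.mpr <| Set.image_subset_iff.mpr
    fun e he => h e (Ideal.subset_span ⟨e, he, rfl⟩)⟩

theorem monomial_mem_sup_iff [Nontrivial R] (hI : IsMonomialIdeal I) (hJ : IsMonomialIdeal J)
    {e : σ →₀ ℕ} : monomial e (1 : R) ∈ I ⊔ J ↔ monomial e 1 ∈ I ∨ monomial e 1 ∈ J := by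
  obtain ⟨S, rfl⟩ := hI
  obtain ⟨T, rfl⟩ := hJ
  simp only [← Ideal.span_union, ← Set.image_union, monomial_mem_span_monomial_iff,
    Set.mem_union, or_and_right, exists_or]

end IsMonomialIdeal

theorem pow_span_X_pow (d : σ → ℕ) (s : Set σ) (n : ℕ) :
    Ideal.span ((fun i => (X i : MvPolynomial σ R) ^ d i) '' s) ^ n =
      Ideal.span ((monomial · 1) '' ((fun k : σ →₀ ℕ => k.sum fun i c => single i (c * d i)) ''
        {k | k.degree = n ∧ ↑k.support ⊆ s})) := by
  rw [Ideal.span, Submodule.span_pow, image_pow_eq_finsuppProd_image, Set.image_image]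
  congr 3
  funext k
  rw [monomial_finsupp_sum_index, C_1, one_mul]
  refine Finsupp.prod_congr fun i _ => ?_
  rw [← pow_mul, X_pow_eq_monomial, mul_comm]

theorem isMonomialIdeal_pow_span_X_pow (d : σ → ℕ) (s : Set σ) (n : ℕ) :
    IsMonomialIdeal (Ideal.span ((fun i => (X i : MvPolynomial σ R) ^ d i) '' s) ^ n) :=
  ⟨_, pow_span_X_pow d s n⟩

theorem monomial_mem_pow_span_X_pow_iff [Nontrivial R] (d : σ → ℕ) (s : Set σ) (n : ℕ)
    (e : σ →₀ ℕ) :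
    monomial e (1 : R) ∈ Ideal.span ((fun i => (X i : MvPolynomial σ R) ^ d i) '' s) ^ n ↔
      ∃ k : σ →₀ ℕ, k.degree = n ∧ ↑k.support ⊆ s ∧ ∀ i, k i * d i ≤ e i := by
  simp only [pow_span_X_pow, monomial_mem_span_monomial_iff, Set.exists_mem_image,
    Finsupp.le_def, sum_single_mul_apply, Set.mem_ofPred_eq, and_assoc]

end MvPolynomial

theorem Finsupp.degree_fin_three (k : Fin 3 →₀ ℕ) : k.degree = k 0 + k 1 + k 2 := by
  rw [degree_eq_sum, Fin.sum_univ_three]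

theorem exponent_covered_of_dvd {m t : ℕ} (hm : 2 ≤ m) (hmt : m ∣ t) (e k : Fin 3 →₀ ℕ)
    (hk : k.degree = 2 * t) (hke : ∀ i, k i * ![2 * m - 2, m, m] i ≤ e i) :
    (∃ k' : Fin 3 →₀ ℕ, k'.degree = t ∧ ↑k'.support ⊆ ({0, 1} : Set (Fin 3)) ∧
      ∀ i, k' i * (2 * m - 1) ≤ e i) ∨ t ≤ e 2 := by
  obtain ⟨s, rfl⟩ := hmt
  have h0 : k 0 * (2 * m - 2) ≤ e 0 := by simpa using hke 0
  have h1 : k 1 * m ≤ e 1 := by simpa using hke 1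
  have h2 : k 2 * m ≤ e 2 := by simpa using hke 2
  rw [degree_fin_three] at hk
  rcases le_or_gt s (k 2) with hs | hs
  · exact .inr (by nlinarith)
  have hsub : (2 * m - 1) * s + s = 2 * (m * s) := by
    zify [show 1 ≤ 2 * m by omega]; ring
  obtain ⟨i, j, hij, hi, hj⟩ :=
    Nat.exists_add_eq_mul_le_of_lt (m := m) (n := 2 * m - 1) (s := s) (a := k 0) (b := k 1)
      (by omega) (by omega)
  rw [show 2 * m - 1 - 1 = 2 * m - 2 by omega] at hi
  refine .inl ⟨single 0 i + single 1 j, by simp [degree_fin_three, hij], ?_, ?_⟩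
  · intro x hx
    fin_cases x <;> simp_all
  · intro x
    fin_cases x <;> simp <;> nlinarith

theorem dvd_of_exponents_covered {m t : ℕ} (hm : 0 < m)
    (h : ∀ e k : Fin 3 →₀ ℕ, k.degree = 2 * t → (∀ i, k i * ![2 * m - 2, m, m] i ≤ e i) →
      (∃ k' : Fin 3 →₀ ℕ, k'.degree = t ∧ ↑k'.support ⊆ ({0, 1} : Set (Fin 3)) ∧
        ∀ i, k' i * (2 * m - 1) ≤ e i) ∨ t ≤ e 2) :
    m ∣ t := by
  by_contra hmt
  set c := t / m
  have hct : m * c < t := Nat.mul_div_lt_iff_not_dvd.mpr hmt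
  have htc : t < m * (c + 1) := Nat.lt_mul_div_succ t hm
  have hc : c ≤ t := Nat.div_le_self t m
  set b := 2 * t - c - 1
  rcases h (single 0 (2 * m - 2) + single 1 (b * m) + single 2 (c * m))
    (single 0 1 + single 1 b + single 2 c) (by simp [degree_fin_three]; omega)
    (fun i => by fin_cases i <;> simp) with ⟨k', hk', hsupp, hle⟩ | h2
  · have hk'2 : k' 2 = 0 := by
      by_contra h2
      simpa using hsupp (mem_support_iff.mpr h2)
    have hx : k' 0 * (2 * m - 1) ≤ 2 * m - 2 := by simpa using hle 0
    have hk'0 : k' 0 = 0 := by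
      by_contra h0
      have := Nat.le_mul_of_pos_left (2 * m - 1) (Nat.pos_of_ne_zero h0)
      omega
    have hy := hle 1
    simp [hk'0, hk'2, degree_fin_three] at hk' hy
    rw [hk'] at hy
    have : b + (c + 1) = 2 * t := by omega
    zify [show 1 ≤ 2 * m by omega] at hy this
    nlinarith
  · simp at h2
    nlinarith

theorem stmt7_general {k : Type*} [Field k] (m t : ℕ) (hm : 2 ≤ m)
    (M P Q : Ideal (MvPolynomial (Fin 3) k))
    (hM : M = (Ideal.span {(X 0 : MvPolynomial (Fin 3) k) ^ (2*m-2),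
      X 1 ^ m, X 2 ^ m}) ^ 2)
    (hP : P = Ideal.span {(X 0 : MvPolynomial (Fin 3) k) ^ (2*m-1), X 1 ^ (2*m-1)})
    (hQ : Q = Ideal.span {(X 2 : MvPolynomial (Fin 3) k)}) :
    M ^ t ≤ P ^ t + Q ^ t ↔ m ∣ t := by
  have hMt :
      M ^ t = Ideal.span ((fun i => X i ^ ![2 * m - 2, m, m] i) '' Set.univ) ^ (2 * t) := by
    rw [hM, ← pow_mul, Set.image_univ]
    congr 3
    ext p
    simp [Fin.exists_fin_succ, eq_comm]
  have hPt : P ^ t = Ideal.span ((fun i => X i ^ (2 * m - 1)) '' {0, 1}) ^ t := by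
    simp [hP, Set.image_insert_eq]
  have hQt : Q ^ t = Ideal.span ((monomial · 1) '' {single 2 t}) := by
    rw [hQ, Ideal.span_singleton_pow, Set.image_singleton, X_pow_eq_monomial]
  rw [hMt, (isMonomialIdeal_pow_span_X_pow _ _ _).le_iff, Submodule.add_eq_sup, hPt, hQt]
  simp only [(isMonomialIdeal_pow_span_X_pow _ _ _).monomial_mem_sup_iff ⟨_, rfl⟩,
    monomial_mem_pow_span_X_pow_iff, monomial_mem_span_monomial_iff, Set.mem_singleton_iff,
    exists_eq_left, single_le_iff, Set.subset_univ, true_and, forall_exists_index, and_imp]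
  exact ⟨dvd_of_exponents_covered (by omega), exponent_covered_of_dvd hm⟩

/-- **Lemma for periodic symbolic depth functions (case `d = 0`).**  In `k[x,y,z]`
with `M = (x^{2m-2}, y^m, z^m)^2`, `P = (x^{2m-1}, y^{2m-1})` and `Q = (z)`,
one has `M^t ⊆ P^t + Q^t` if and only if `m` divides `t`. -/
theorem stmt7 {k : Type*} [Field k] (m t : ℕ) (hm : 2 ≤ m) (ht : 1 ≤ t)
    (M P Q : Ideal (MvPolynomial (Fin 3) k))
    (hM : M = (Ideal.span {(X 0 : MvPolynomial (Fin 3) k) ^ (2*m-2),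
      X 1 ^ m, X 2 ^ m}) ^ 2)
    (hP : P = Ideal.span {(X 0 : MvPolynomial (Fin 3) k) ^ (2*m-1), X 1 ^ (2*m-1)})
    (hQ : Q = Ideal.span {(X 2 : MvPolynomial (Fin 3) k)}) :
    M ^ t ≤ P ^ t + Q ^ t ↔ m ∣ t :=
  stmt7_general m t hm M P Q hM hP hQ
end

section
/- Let $m \ge 2$ and $s \ge 1$, and suppose $t \le m - 1$. Then the system of conditions $0 \le \ell \le i \le 2t$, $\lfloor (2m-2)\ell/(2m-1) \rfloor + \lfloor m(i-\ell)/(2m-1) \rfloor < t$, and $2m(2t - i) < t$ has an integer solution $(\ell, i)$; whereas if $t \ge m$ the system has no integer solution. -/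
/-!
Write `N = 2m - 1`, `j = i - ℓ` and `d = 2t - i`, so that `(2m-2)ℓ + mj = 2mt - md + (m-2)ℓ`.
Removing the two floors loses at most `2(N-1)/N`, and when `2md < t`, `t ≥ 2` and `ℓ ≥ 2` what
remains is still more than `t - 1`. For `ℓ ≤ 1` the second floor alone is at least `t`, because
`t ≥ m(d+1)`. Conversely, for `t < m` the pair `(ℓ, i) = (1, 2t)` works: `⌊(2m-2)/N⌋ = 0` and
`m(2t-1) < Nt`.
-/

def IsSolution (m t ℓ i : ℕ) : Prop :=
  ℓ ≤ i ∧ i ≤ 2*t ∧ ((2*m-2)*ℓ)/(2*m-1) + (m*(i-ℓ))/(2*m-1) < t ∧ 2*m*(2*t-i) < t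

theorem Nat.add_le_mul_div_add_div {c : ℕ} (hc : 0 < c) (a b : ℕ) :
    a + b ≤ c * (a / c + b / c) + 2 * (c - 1) := by
  have ha := Nat.div_add_mod a c
  have hb := Nat.div_add_mod b c
  have := Nat.mod_lt a hc
  have := Nat.mod_lt b hc
  rw [mul_add]
  omega

theorem isSolution_one_two_mul {m t : ℕ} (ht : 1 ≤ t) (htm : t < m) :
    IsSolution m t 1 (2*t) := by
  have hN : 0 < 2*m - 1 := by omega
  refine ⟨by omega, le_rfl, ?_, by rw [Nat.sub_self, mul_zero]; exact ht⟩
  have hfirst : (2*m-2)*1/(2*m-1) = 0 := Nat.div_eq_of_lt (by omega)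
  have hsecond : m*(2*t-1)/(2*m-1) < t := by
    rw [Nat.div_lt_iff_lt_mul hN]
    zify [show 1 ≤ 2*t by omega, show 1 ≤ 2*m by omega]
    nlinarith
  omega

theorem le_floor_sum_of_le_one {m t ℓ j d : ℕ} (hm : 0 < m) (hmt : m ≤ t) (hd : 2*m*d < t)
    (hsum : ℓ + j + d = 2*t) (hℓ : ℓ ≤ 1) : t ≤ (2*m-2)*ℓ/(2*m-1) + m*j/(2*m-1) := by
  refine le_add_left ((Nat.le_div_iff_mul_le (by omega)).2 ?_)
  have hj : 2*t ≤ j + d + 1 := by omega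
  have hmd : m + m*d ≤ t := by
    rcases Nat.eq_zero_or_pos d with rfl | hd0
    · simpa using hmt
    · nlinarith
  zify [show 1 ≤ 2*m by omega] at hj hmd ⊢
  nlinarith

theorem le_floor_sum_of_two_le {m t ℓ j d : ℕ} (hm : 2 ≤ m) (ht : 2 ≤ t) (hd : 2*m*d < t)
    (hsum : ℓ + j + d = 2*t) (hℓ : 2 ≤ ℓ) : t ≤ (2*m-2)*ℓ/(2*m-1) + m*j/(2*m-1) := by
  obtain ⟨q, hq⟩ : ∃ q, (2*m-2)*ℓ/(2*m-1) + m*j/(2*m-1) = q := ⟨_, rfl⟩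
  have hdrop := Nat.add_le_mul_div_add_div (show 0 < 2*m - 1 by omega) ((2*m-2)*ℓ) (m*j)
  rw [hq] at hdrop ⊢
  by_contra! hqt
  have hqt' : (2*m-1)*q ≤ (2*m-1)*(t-1) := Nat.mul_le_mul_left _ (by omega)
  have hℓ2 : (m-2)*2 ≤ (m-2)*ℓ := Nat.mul_le_mul_left _ hℓ
  have hmd : m*d + 2 ≤ t := by rw [mul_assoc] at hd; omega
  zify [show 1 ≤ 2*m by omega, show 1 ≤ 2*m - 1 by omega, show 1 ≤ t by omega, hm,
    show 2 ≤ 2*m by omega] at hdrop hqt' hℓ2 hmd hsum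
  have hmj : (m:ℤ)*j = 2*m*t - m*ℓ - m*d := by linear_combination (m:ℤ)*hsum
  linarith

theorem not_isSolution {m t : ℕ} (hm : 2 ≤ m) (hmt : m ≤ t) (ℓ i : ℕ) : ¬ IsSolution m t ℓ i := by
  rintro ⟨hℓi, hi, hlt, hd⟩
  obtain ⟨j, rfl⟩ := Nat.exists_eq_add_of_le hℓi
  obtain ⟨d, hsum⟩ := Nat.exists_eq_add_of_le hi
  rw [Nat.add_sub_cancel_left] at hlt
  rw [hsum, Nat.add_sub_cancel_left] at hd
  refine absurd hlt (not_lt.2 ?_)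
  rcases le_or_gt ℓ 1 with hℓ | hℓ
  · exact le_floor_sum_of_le_one (by omega) hmt hd hsum.symm hℓ
  · exact le_floor_sum_of_two_le hm (by omega) hd hsum.symm hℓ

theorem stmt9_general (m t : ℕ) (hm : 2 ≤ m) (ht : 1 ≤ t) :
    (t ≤ m - 1 → ∃ ℓ i : ℕ, ℓ ≤ i ∧ i ≤ 2*t ∧
      ((2*m-2)*ℓ)/(2*m-1) + (m*(i-ℓ))/(2*m-1) < t ∧ 2*m*(2*t-i) < t) ∧
    (m ≤ t → ¬ ∃ ℓ i : ℕ, ℓ ≤ i ∧ i ≤ 2*t ∧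
      ((2*m-2)*ℓ)/(2*m-1) + (m*(i-ℓ))/(2*m-1) < t ∧ 2*m*(2*t-i) < t) :=
  ⟨fun htm => ⟨1, 2*t, isSolution_one_two_mul ht (by omega)⟩,
    fun hmt ⟨ℓ, i, hsol⟩ => not_isSolution hm hmt ℓ i hsol⟩

/-- **Solvability of the diophantine system in the proof of Lemma 4.2.**
Let `m ≥ 2`, `s ≥ 1`, `t ≥ 1`.  If `t ≤ m - 1` the system
`0 ≤ ℓ ≤ i ≤ 2t`, `⌊(2m-2)ℓ/(2m-1)⌋ + ⌊m(i-ℓ)/(2m-1)⌋ < t`, `2m(2t-i) < t`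
has an integer solution `(ℓ, i)`, and if `t ≥ m` it has no solution. -/
theorem stmt9 (m s t : ℕ) (hm : 2 ≤ m) (hs : 1 ≤ s) (ht : 1 ≤ t) :
    (t ≤ m - 1 → ∃ ℓ i : ℕ, ℓ ≤ i ∧ i ≤ 2*t ∧
      ((2*m-2)*ℓ)/(2*m-1) + (m*(i-ℓ))/(2*m-1) < t ∧ 2*m*(2*t-i) < t) ∧
    (m ≤ t → ¬ ∃ ℓ i : ℕ, ℓ ≤ i ∧ i ≤ 2*t ∧
      ((2*m-2)*ℓ)/(2*m-1) + (m*(i-ℓ))/(2*m-1) < t ∧ 2*m*(2*t-i) < t) :=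
  stmt9_general m t hm ht
end

section
/- Let $m \ge 2$ and let $t$ be a positive integer divisible by $m$. Then there is no pair of integers $(i,j)$ with $i, j \ge 0$, $i + j \le 2t$, $\lfloor (2m-2)i/(2m-1) \rfloor + \lfloor mj/(2m-1) \rfloor < t$, and $m(2t - i - j) < t$. -/
/- With `t = m k` and `d = 2m - 1`, the last condition says `i + j > d k`.  For `i = 0` the
second floor alone is already `≥ m k`.  For `i ≥ 1` the numerators satisfy
`(2m-2) i + m j = m (i + j) + (m-2) i ≥ d (m k + 1) - 1`, while two floors summing to at most
`m k - 1` lose at most `2d - 2` in total, which would force the numerators below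
`d (m k + 1) - 1`. -/

theorem Nat.add_add_two_le_mul_div_add_div_add_two {d : ℕ} (hd : 0 < d) (a b : ℕ) :
    a + b + 2 ≤ d * (a / d + b / d + 2) := by
  have ha := Nat.lt_mul_div_succ a hd
  have hb := Nat.lt_mul_div_succ b hd
  linarith [show d * (a / d + b / d + 2) = d * (a / d + 1) + d * (b / d + 1) by ring]

theorem Nat.lt_of_mul_two_mul_sub_lt {m k s : ℕ} (h : m * (2 * (m * k) - s) < m * k) :
    (2 * m - 1) * k < s := by
  have hlt : 2 * (m * k) - s < k := Nat.lt_of_mul_lt_mul_left h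
  have hexpand : (2 * m - 1) * k = 2 * (m * k) - k := by
    rw [Nat.sub_mul, one_mul, mul_assoc]
  have hk : k ≤ m * k := Nat.le_mul_of_pos_left k (Nat.pos_of_ne_zero fun hm => by simp [hm] at h)
  omega

theorem stmt10_general (m t : ℕ) (hm : 2 ≤ m) (hdvd : m ∣ t) :
    ¬ ∃ i j : ℕ, i + j ≤ 2*t ∧
      ((2*m-2)*i)/(2*m-1) + (m*j)/(2*m-1) < t ∧ m*(2*t-i-j) < t := by
  rintro ⟨i, j, -, hfloor, hdeficit⟩
  obtain ⟨k, rfl⟩ := hdvd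
  have hd : 0 < 2 * m - 1 := by omega
  have hsum : (2 * m - 1) * k < i + j :=
    Nat.lt_of_mul_two_mul_sub_lt (by rwa [Nat.sub_sub] at hdeficit)
  cases i with
  | zero =>
    have hj : m * k ≤ m * j / (2 * m - 1) := by
      rw [Nat.le_div_iff_mul_le hd]
      nlinarith
    rw [Nat.mul_zero, Nat.zero_div, zero_add] at hfloor
    omega
  | succ i =>
    have hnum : (2 * m - 1) * (m * k + 1) ≤ (2 * m - 2) * (i + 1) + m * j + 1 := by
      obtain ⟨n, rfl⟩ : ∃ n, m = n + 2 := ⟨m - 2, by omega⟩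
      simp only [show 2 * (n + 2) - 1 = 2 * n + 3 by omega,
        show 2 * (n + 2) - 2 = 2 * n + 2 by omega] at hsum ⊢
      nlinarith
    have hrem := Nat.add_add_two_le_mul_div_add_div_add_two hd ((2 * m - 2) * (i + 1)) (m * j)
    have hfloor' : (2 * m - 1) * ((2 * m - 2) * (i + 1) / (2 * m - 1) + m * j / (2 * m - 1) + 2)
        ≤ (2 * m - 1) * (m * k + 1) := Nat.mul_le_mul_left _ (by omega)
    omega

/-- **Unsolvability of the diophantine system when `m ∣ t`.**  For `m ≥ 2` and a
positive integer `t` divisible by `m`, there is no pair `(i,j)` of non-negative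
integers with `i + j ≤ 2t`, `⌊(2m-2)i/(2m-1)⌋ + ⌊mj/(2m-1)⌋ < t` and
`m(2t - i - j) < t`. -/
theorem stmt10 (m t : ℕ) (hm : 2 ≤ m) (ht : 1 ≤ t) (hdvd : m ∣ t) :
    ¬ ∃ i j : ℕ, i + j ≤ 2*t ∧
      ((2*m-2)*i)/(2*m-1) + (m*j)/(2*m-1) < t ∧ m*(2*t-i-j) < t :=
  stmt10_general m t hm hdvd
end

section
/- Let $s \ge 3$ and work in the polynomial ring $R = k[x_{i,j} : 1 \le i \le s, 1 \le j \le s-1]$. Let $P_i = (x_{i,1},\dots,x_{i,s-1})$ for $1 \le i \le s$ and $Q = (f_1,\dots,f_s)$ where $f_i = x_{i,1}\cdots x_{i,s-1}$. Then $Q^t \subseteq P_1^t + \cdots + P_s^t$ if and only if $t \notin E(s)$, where $E(s) = \bigcup_{i \ge 1}\{t : i(s-1)+1 \le t \le is\}$. -/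
/-!
`Q^t` is generated by the products `∏ fᵢ^cᵢ` with `∑ cᵢ = t`. Since `fᵢ ∈ Pᵢ^(s-1)`, such a product
lies in `Pᵢ^t` as soon as `(s-1) cᵢ ≥ t`. Conversely, collapsing every variable `x_{i,j}` to `yᵢ`
sends `P₁^t + ⋯ + Pₛ^t` into the monomial ideal `(y₁^t, …, yₛ^t)` and the product to
`∏ yᵢ^((s-1) cᵢ)`, so some `(s-1) cᵢ ≥ t` is also necessary. Finally, `t` splits into `s` parts
with `(s-1) cᵢ < t` for all `i` iff `n (s-1) < t ≤ n s` for some `n` (the largest part).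
-/

open MvPolynomial

theorem Fin.exists_sum_eq_forall_le_of_le_mul {n t : ℕ} :
    ∀ {s : ℕ}, t ≤ n * s → ∃ c : Fin s → ℕ, ∑ i, c i = t ∧ ∀ i, c i ≤ n
  | 0, h => ⟨fun _ => 0, by simp; omega, fun i => i.elim0⟩
  | s + 1, h => by
    obtain ⟨c, hsum, hle⟩ := exists_sum_eq_forall_le_of_le_mul (n := n) (t := t - min n t) (s := s)
      (by rw [Nat.mul_succ] at h; omega)
    refine ⟨Fin.cons (min n t) c, ?_, Fin.cases (min_le_left n t) hle⟩
    rw [Fin.sum_univ_succ]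
    simp only [Fin.cons_zero, Fin.cons_succ, hsum]
    omega

theorem Fin.exists_sum_eq_forall_mul_lt_iff {s m t : ℕ} (ht : 0 < t) :
    (∃ c : Fin s → ℕ, ∑ i, c i = t ∧ ∀ i, c i * m < t) ↔
      ∃ n, 1 ≤ n ∧ n * m + 1 ≤ t ∧ t ≤ n * s := by
  constructor
  · rintro ⟨c, hsum, hlt⟩
    have hs : Nonempty (Fin s) := by
      by_contra! h
      simp [Finset.univ_eq_empty] at hsum
      omega
    obtain ⟨i, -, hi⟩ := Finset.exists_mem_eq_sup Finset.univ Finset.univ_nonempty c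
    have hts : t ≤ Finset.univ.sup c * s := by
      simpa [← hsum, mul_comm] using
        Finset.sum_le_card_nsmul Finset.univ c _ fun i _ => Finset.le_sup (Finset.mem_univ i)
    refine ⟨Finset.univ.sup c, Nat.pos_of_ne_zero fun h0 => ?_, hi ▸ hlt i, hts⟩
    rw [h0, zero_mul] at hts
    omega
  · rintro ⟨n, -, hnm, htn⟩
    obtain ⟨c, hsum, hle⟩ := exists_sum_eq_forall_le_of_le_mul htn
    exact ⟨c, hsum, fun i => (Nat.mul_le_mul_right m (hle i)).trans_lt hnm⟩

theorem Ideal.span_range_pow_le_iff {A ι : Type*} [CommSemiring A] [Fintype ι] (f : ι → A)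
    (n : ℕ) (J : Ideal A) :
    Ideal.span (Set.range f) ^ n ≤ J ↔ ∀ c : ι → ℕ, ∑ i, c i = n → ∏ i, f i ^ c i ∈ J := by
  rw [Ideal.span, Submodule.span_pow, ← Set.image_univ, Finsupp.image_pow_eq_finsuppProd_image,
    Submodule.span_le, Set.image_subset_iff]
  simp only [Set.subset_def, Set.mem_preimage, SetLike.mem_coe]
  refine Finsupp.equivFunOnFinite.forall_congr fun c => ?_
  simp [Finsupp.degree_eq_sum, Finsupp.prod_fintype]

namespace MvPolynomial

variable {R ι : Type*} [CommSemiring R]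

theorem exists_le_of_prod_X_pow_mem_span_X_pow [Fintype ι] [Nontrivial R] {n : ι → ℕ} {t : ℕ}
    (h : ∏ i, X i ^ n i ∈ Ideal.span (Set.range fun i => (X i : MvPolynomial ι R) ^ t)) :
    ∃ i, t ≤ n i := by
  classical
  have hmono : ∏ i, X i ^ n i = monomial (Finsupp.equivFunOnFinite.symm n) (1 : R) := by
    rw [monomial_eq, C_1, one_mul, Finsupp.prod_fintype _ _ (by simp)]
    rfl
  have hgen : (Set.range fun i : ι => (X i : MvPolynomial ι R) ^ t) =
      (monomial · 1) '' Set.range fun i => Finsupp.single i t := by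
    rw [← Set.range_comp]
    simp [Function.comp_def, X_pow_eq_monomial]
  rw [hmono, hgen, mem_ideal_span_monomial_image, support_monomial, if_neg one_ne_zero] at h
  obtain ⟨_, ⟨i, rfl⟩, hi⟩ := h _ (Finset.mem_singleton_self _)
  exact ⟨i, by simpa using hi⟩

variable (R) (κ : Type*)

noncomputable def rowIdeal (i : ι) : Ideal (MvPolynomial (ι × κ) R) :=
  Ideal.span (Set.range fun j => X (i, j))

variable [Fintype κ]

noncomputable def rowProd (i : ι) : MvPolynomial (ι × κ) R := ∏ j, X (i, j)

variable {R κ}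

theorem rowProd_mem_rowIdeal_pow (i : ι) :
    rowProd R κ i ∈ rowIdeal R κ i ^ Fintype.card κ := by
  rw [← Finset.card_univ, ← Finset.prod_const]
  exact Ideal.prod_mem_prod fun j _ => Ideal.subset_span ⟨j, rfl⟩

theorem prod_rowProd_pow_mem_rowIdeal_pow [Fintype ι] {c : ι → ℕ} {t : ℕ} {i : ι}
    (h : t ≤ c i * Fintype.card κ) : ∏ i', rowProd R κ i' ^ c i' ∈ rowIdeal R κ i ^ t := by
  refine Ideal.mem_of_dvd _ (Finset.dvd_prod_of_mem _ (Finset.mem_univ i))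
    (Ideal.pow_le_pow_right h ?_)
  rw [mul_comm, pow_mul]
  exact Ideal.pow_mem_pow (rowProd_mem_rowIdeal_pow i) _

theorem exists_le_mul_card_of_prod_rowProd_pow_mem [Fintype ι] [Nontrivial R] {c : ι → ℕ} {t : ℕ}
    (h : ∏ i, rowProd R κ i ^ c i ∈ ⨆ i : ι, rowIdeal R κ i ^ t) :
    ∃ i, t ≤ c i * Fintype.card κ := by
  have hmap : Ideal.map (rename Prod.fst) (⨆ i : ι, rowIdeal R κ i ^ t) ≤
      Ideal.span (Set.range fun i : ι => X i ^ t) := by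
    rw [Ideal.map_iSup]
    refine iSup_le fun i => ?_
    calc Ideal.map (rename Prod.fst) (rowIdeal R κ i ^ t)
        ≤ Ideal.span {X i} ^ t := by
          rw [Ideal.map_pow, rowIdeal, Ideal.map_span]
          refine Ideal.pow_right_mono (Ideal.span_le.2 ?_) t
          rintro _ ⟨_, ⟨j, rfl⟩, rfl⟩
          exact Ideal.subset_span (by simp)
      _ = Ideal.span {X i ^ t} := Ideal.span_singleton_pow _ t
      _ ≤ _ := Ideal.span_mono (by simp)
  apply exists_le_of_prod_X_pow_mem_span_X_pow (R := R)
  convert hmap (Ideal.mem_map_of_mem _ h) using 1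
  simp [map_prod, rowProd, ← pow_mul, mul_comm]

theorem span_range_rowProd_pow_le_iSup_iff [Fintype ι] [Nontrivial R] (t : ℕ) :
    Ideal.span (Set.range fun i : ι => rowProd R κ i) ^ t ≤ ⨆ i : ι, rowIdeal R κ i ^ t ↔
      ∀ c : ι → ℕ, ∑ i, c i = t → ∃ i, t ≤ c i * Fintype.card κ := by
  rw [Ideal.span_range_pow_le_iff]
  exact forall₂_congr fun c _ => ⟨exists_le_mul_card_of_prod_rowProd_pow_mem,
    fun ⟨i, hi⟩ => Ideal.mem_iSup_of_mem i (prod_rowProd_pow_mem_rowIdeal_pow hi)⟩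

end MvPolynomial

theorem stmt14_general {k : Type*} [Field k] (s : ℕ) (t : ℕ) (ht : 1 ≤ t)
    (Q : Ideal (MvPolynomial (Fin s × Fin (s-1)) k))
    (P : Fin s → Ideal (MvPolynomial (Fin s × Fin (s-1)) k))
    (hQ : Q = Ideal.span (Set.range fun i : Fin s =>
      ∏ j : Fin (s-1), (X (i, j) : MvPolynomial (Fin s × Fin (s-1)) k)))
    (hP : ∀ i : Fin s, P i = Ideal.span (Set.range fun j : Fin (s-1) =>
      (X (i, j) : MvPolynomial (Fin s × Fin (s-1)) k))) :
    Q ^ t ≤ ⨆ i : Fin s, (P i) ^ t ↔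
      ¬ ∃ i : ℕ, 1 ≤ i ∧ i*(s-1)+1 ≤ t ∧ t ≤ i*s := by
  obtain rfl : P = rowIdeal k (Fin (s-1)) := funext hP
  subst hQ
  refine (span_range_rowProd_pow_le_iSup_iff t).trans ?_
  rw [Fintype.card_fin, ← Fin.exists_sum_eq_forall_mul_lt_iff ht]
  push Not
  rfl

/-- **Claim 1 in the proof of Theorem 2.6.**  In the polynomial ring
`R = k[x_{i,j} : 1 ≤ i ≤ s, 1 ≤ j ≤ s-1]`, let `P_i = (x_{i,1},…,x_{i,s-1})`
and `Q = (f_1,…,f_s)` with `f_i = x_{i,1} ⋯ x_{i,s-1}`.  Then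
`Q^t ⊆ P_1^t + ⋯ + P_s^t` if and only if `t ∉ E(s)`, where
`E(s) = ⋃_{i ≥ 1} {t : i(s-1)+1 ≤ t ≤ is}`. -/
theorem stmt14 {k : Type*} [Field k] (s : ℕ) (hs : 3 ≤ s) (t : ℕ) (ht : 1 ≤ t)
    (Q : Ideal (MvPolynomial (Fin s × Fin (s-1)) k))
    (P : Fin s → Ideal (MvPolynomial (Fin s × Fin (s-1)) k))
    (hQ : Q = Ideal.span (Set.range fun i : Fin s =>
      ∏ j : Fin (s-1), (X (i, j) : MvPolynomial (Fin s × Fin (s-1)) k)))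
    (hP : ∀ i : Fin s, P i = Ideal.span (Set.range fun j : Fin (s-1) =>
      (X (i, j) : MvPolynomial (Fin s × Fin (s-1)) k))) :
    Q ^ t ≤ ⨆ i : Fin s, (P i) ^ t ↔
      ¬ ∃ i : ℕ, 1 ≤ i ∧ i*(s-1)+1 ≤ t ∧ t ≤ i*s :=
  stmt14_general s t ht Q P hQ hP
end

section
/- Let $d \ge 2$, let $t \ge n(d-1)$, and let $a \in \mathbb{N}^n$ with $a_1 + \cdots + a_n = dt$. Then there exist $b, c \in \mathbb{N}^n$ with $a = (d-1)b + c$ and $|b| = |c| = t$, where $|v|$ denotes the sum of coordinates of $v$. -/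
/-!
Write `e = d - 1` and let `q i = a i / e`. Since every remainder `a i % e` is below `e`,
`e * ∑ q ≥ ∑ a - n e = e t + t - n e ≥ e t`, so `∑ q ≥ t`. Lowering the entries of `q`
gives `b ≤ q` with `∑ b = t`; then `c = a - e b` is nonnegative and `∑ c = (e + 1) t - e t = t`.
-/

open Finset

theorem Fintype.exists_le_sum_eq_of_le_sum {ι : Type*} [Fintype ι] (f : ι → ℕ) {t : ℕ}
    (ht : t ≤ ∑ i, f i) : ∃ g ≤ f, ∑ i, g i = t := by
  obtain ⟨g, hg, hsum⟩ := Finsupp.exists_le_degree_eq (Finsupp.equivFunOnFinite.symm f) t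
    (by simpa [Finsupp.degree_eq_sum] using ht)
  exact ⟨g, fun i => by simpa using hg i, by simpa [Finsupp.degree_eq_sum] using hsum⟩

theorem sum_le_mul_sum_div_add_card_mul {ι : Type*} [Fintype ι] (a : ι → ℕ) {e : ℕ}
    (he : 0 < e) : ∑ i, a i ≤ e * ∑ i, a i / e + Fintype.card ι * e := by
  calc ∑ i, a i ≤ ∑ i, (e * (a i / e) + e) :=
        sum_le_sum fun i _ => (Nat.lt_mul_div_succ (a i) he).le
    _ = e * ∑ i, a i / e + Fintype.card ι * e := by
        rw [sum_add_distrib, ← mul_sum, sum_const, card_univ, smul_eq_mul]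

theorem exists_eq_mul_add_of_sum_eq {ι : Type*} [Fintype ι] {e t : ℕ} (he : 0 < e)
    (ht : Fintype.card ι * e ≤ t) (a : ι → ℕ) (ha : ∑ i, a i = (e + 1) * t) :
    ∃ b c : ι → ℕ, (∀ i, a i = e * b i + c i) ∧ ∑ i, b i = t ∧ ∑ i, c i = t := by
  have hq : t ≤ ∑ i, a i / e := by
    have := sum_le_mul_sum_div_add_card_mul a he
    refine le_of_mul_le_mul_left ?_ he
    linarith
  obtain ⟨b, hbq, hb⟩ := Fintype.exists_le_sum_eq_of_le_sum (fun i => a i / e) hq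
  have hba : ∀ i, e * b i ≤ a i := fun i =>
    (Nat.mul_le_mul_left e (hbq i)).trans (Nat.mul_div_le (a i) e)
  refine ⟨b, fun i => a i - e * b i, fun i => (Nat.add_sub_of_le (hba i)).symm, hb, ?_⟩
  rw [sum_tsub_distrib _ fun i _ => hba i, ← mul_sum, hb, ha, add_one_mul, Nat.add_sub_cancel_left]

/-- **Combinatorial decomposition in the proof of Lemma 3.6.**  Let `d ≥ 2`,
`t ≥ n(d-1)` and `a ∈ ℕ^n` with `a_1 + ⋯ + a_n = dt`.  Then there are
`b, c ∈ ℕ^n` with `a = (d-1)b + c` componentwise and `|b| = |c| = t`. -/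
theorem stmt16 (n d t : ℕ) (hd : 2 ≤ d) (ht : n*(d-1) ≤ t)
    (a : Fin n → ℕ) (ha : ∑ i, a i = d*t) :
    ∃ b c : Fin n → ℕ, (∀ i, a i = (d-1)*(b i) + c i) ∧
      ∑ i, b i = t ∧ ∑ i, c i = t := by
  obtain ⟨e, rfl⟩ : ∃ e, d = e + 1 := ⟨d - 1, by omega⟩
  exact exists_eq_mul_add_of_sum_eq (by omega) (by simpa using ht) a ha
end

section
/- Consider the monomial ideals $M = (x^7, y^7, x^2y^2z, z^5)^2$, $P = (x^7, y^7)$, and $Q = (z^2)$ in $k[x,y,z]$. Then $M^t \subseteq P^t + Q^t$ for all positive integers $t \ne 2$, while $M^2 \not\subseteq P^2 + Q^2$ (witnessed by $x^{13}y^6z^3 \in M^2 \setminus (P^2 + Q^2)$). -/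
/-!
`M^t` is generated by the products of `2t` of the generators `x^7, y^7, x^2y^2z, z^5`, so it
suffices to place each such monomial in `P^t` or in `Q^t`. Either its `z`-degree is at least `2t`,
or few `z`'s were used and then the `x`- and `y`-degrees together contain `t` multiples of `7`;
this counting argument works for every `t ≠ 2`. The failure at `t = 2` is detected by the monomial
criterion for ideals generated by powers of variables: `P^2 + Q^2 ⊆ (x^14, y^7, z^4)`, which does
not contain `x^13 y^6 z^3`.
-/

open MvPolynomial

section CommSemiring

variable {R : Type*} [CommSemiring R]

theorem Ideal.span_four_pow_le (g₁ g₂ g₃ g₄ : R) (n : ℕ) :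
    Ideal.span {g₁, g₂, g₃, g₄} ^ n ≤ Ideal.span
      {m | ∃ a b c d : ℕ, a + b + c + d = n ∧ m = g₁ ^ a * g₂ ^ b * g₃ ^ c * g₄ ^ d} := by
  induction n with
  | zero =>
    rw [pow_zero, Ideal.one_eq_top, top_le_iff, Ideal.eq_top_iff_one]
    exact Ideal.subset_span ⟨0, 0, 0, 0, rfl, by simp⟩
  | succ n ih =>
    rw [pow_succ]
    refine (Ideal.mul_mono_left ih).trans ?_
    rw [Ideal.span_mul_span', Ideal.span_le]
    rintro _ ⟨_, ⟨a, b, c, d, rfl, rfl⟩, g, hg, rfl⟩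
    apply Ideal.subset_span
    rcases hg with rfl | rfl | rfl | rfl
    · exact ⟨a + 1, b, c, d, by omega, by ring⟩
    · exact ⟨a, b + 1, c, d, by omega, by ring⟩
    · exact ⟨a, b, c + 1, d, by omega, by ring⟩
    · exact ⟨a, b, c, d + 1, by omega, by ring⟩

theorem pow_mul_pow_mem_span_pair_pow (x y : R) {n p q t : ℕ} (h : t ≤ p / n + q / n) :
    x ^ p * y ^ q ∈ Ideal.span {x ^ n, y ^ n} ^ t := by
  obtain ⟨i, hit, hip, hiq⟩ : ∃ i ≤ t, i ≤ p / n ∧ t - i ≤ q / n :=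
    ⟨min t (p / n), min_le_left _ _, min_le_right _ _, by grind⟩
  have hx : x ^ n ∈ Ideal.span {x ^ n, y ^ n} := Ideal.subset_span (by simp)
  have hy : y ^ n ∈ Ideal.span {x ^ n, y ^ n} := Ideal.subset_span (by simp)
  have hprod := Ideal.mul_mem_mul (Ideal.pow_mem_pow hx i) (Ideal.pow_mem_pow hy (t - i))
  rw [← pow_add, Nat.add_sub_cancel' hit, ← pow_mul, ← pow_mul] at hprod
  refine Ideal.mem_of_dvd _ (mul_dvd_mul (pow_dvd_pow _ ?_) (pow_dvd_pow _ ?_)) hprod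
  · exact (Nat.mul_le_mul_left n hip).trans (Nat.mul_div_le p n)
  · exact (Nat.mul_le_mul_left n hiq).trans (Nat.mul_div_le q n)

theorem pow_mem_span_singleton_pow_pow (z : R) {n r t : ℕ} (h : n * t ≤ r) :
    z ^ r ∈ Ideal.span {z ^ n} ^ t := by
  rw [Ideal.span_singleton_pow, Ideal.mem_span_singleton, ← pow_mul]
  exact pow_dvd_pow z h

theorem Ideal.sup_sq_le (I J : Ideal R) : (I ⊔ J) ^ 2 ≤ I ^ 2 ⊔ J := by
  rw [sq, sq, Ideal.sup_mul, Ideal.mul_sup, Ideal.mul_sup, sup_assoc]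
  gcongr
  exact sup_le Ideal.mul_le_right (sup_le Ideal.mul_le_left Ideal.mul_le_left)

end CommSemiring

theorem MvPolynomial.monomial_one_notMem_span_X_pow_image {σ R : Type*} [CommSemiring R]
    [Nontrivial R] {μ : σ →₀ ℕ} {s : Set (σ × ℕ)} (h : ∀ p ∈ s, μ p.1 < p.2) :
    monomial μ (1 : R) ∉ Ideal.span ((fun p => X p.1 ^ p.2) '' s) := by
  have hgen : (fun p : σ × ℕ => (X p.1 ^ p.2 : MvPolynomial σ R)) =
      (fun ν => monomial ν 1) ∘ fun p => Finsupp.single p.1 p.2 := by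
    ext1 p; exact X_pow_eq_monomial
  rw [hgen, Set.image_comp, mem_ideal_span_monomial_image]
  intro hmem
  obtain ⟨_, ⟨⟨i, n⟩, hin, rfl⟩, hle⟩ :=
    hmem μ (by classical simp [mem_support_iff, coeff_monomial])
  exact (h _ hin).not_ge (Finsupp.single_le_iff.1 hle)

section Example

variable {R : Type*} [CommSemiring R] (x y z : R)

/- A product of `2t` generators has `x`-, `y`- and `z`-degrees `7a + 2c`, `7b + 2c`, `c + 5d`.
For `t = 2` this fails at `a = 1, c = 3`, the witness `x^13 y^6 z^3`. -/
theorem exponents_dichotomy {a b c d t : ℕ} (h : a + b + c + d = 2 * t) (ht2 : t ≠ 2) :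
    t ≤ (7 * a + 2 * c) / 7 + (7 * b + 2 * c) / 7 ∨ 2 * t ≤ c + 5 * d := by
  rw [Nat.mul_add_div (by norm_num), Nat.mul_add_div (by norm_num)]
  rcases Nat.eq_zero_or_pos t with rfl | ht
  · exact .inr (Nat.zero_le _)
  · omega

theorem gens_prod_mem_add {a b c d t : ℕ} (h : a + b + c + d = 2 * t) (ht2 : t ≠ 2) :
    (x ^ 7) ^ a * (y ^ 7) ^ b * (x ^ 2 * y ^ 2 * z) ^ c * (z ^ 5) ^ d ∈
      Ideal.span {x ^ 7, y ^ 7} ^ t + Ideal.span {z ^ 2} ^ t := by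
  have hprod : (x ^ 7) ^ a * (y ^ 7) ^ b * (x ^ 2 * y ^ 2 * z) ^ c * (z ^ 5) ^ d =
      x ^ (7 * a + 2 * c) * y ^ (7 * b + 2 * c) * z ^ (c + 5 * d) := by ring
  rw [hprod, Ideal.add_eq_sup]
  rcases exponents_dichotomy h ht2 with hxy | hz
  · exact Ideal.mem_sup_left (Ideal.mul_mem_right _ _ (pow_mul_pow_mem_span_pair_pow x y hxy))
  · exact Ideal.mem_sup_right (Ideal.mul_mem_left _ _ (pow_mem_span_singleton_pow_pow z hz))

theorem span_gens_sq_pow_le {t : ℕ} (ht2 : t ≠ 2) :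
    (Ideal.span {x ^ 7, y ^ 7, x ^ 2 * y ^ 2 * z, z ^ 5} ^ 2) ^ t ≤
      Ideal.span {x ^ 7, y ^ 7} ^ t + Ideal.span {z ^ 2} ^ t := by
  rw [← pow_mul]
  refine (Ideal.span_four_pow_le _ _ _ _ _).trans (Ideal.span_le.2 ?_)
  rintro _ ⟨a, b, c, d, h, rfl⟩
  exact gens_prod_mem_add x y z h ht2

theorem witness_mem_span_gens_sq_sq :
    x ^ 13 * y ^ 6 * z ^ 3 ∈ (Ideal.span {x ^ 7, y ^ 7, x ^ 2 * y ^ 2 * z, z ^ 5} ^ 2) ^ 2 := by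
  have hx : x ^ 7 ∈ Ideal.span {x ^ 7, y ^ 7, x ^ 2 * y ^ 2 * z, z ^ 5} :=
    Ideal.subset_span (by simp)
  have hxyz : x ^ 2 * y ^ 2 * z ∈ Ideal.span {x ^ 7, y ^ 7, x ^ 2 * y ^ 2 * z, z ^ 5} :=
    Ideal.subset_span (by simp)
  rw [← pow_mul, pow_succ', show x ^ 13 * y ^ 6 * z ^ 3 = x ^ 7 * (x ^ 2 * y ^ 2 * z) ^ 3 by ring]
  exact Ideal.mul_mem_mul hx (Ideal.pow_mem_pow hxyz 3)

end Example

theorem witness_notMem_add {k : Type*} [CommSemiring k] [Nontrivial k] :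
    (X 0 : MvPolynomial (Fin 3) k) ^ 13 * X 1 ^ 6 * X 2 ^ 3 ∉
      Ideal.span {(X 0 : MvPolynomial (Fin 3) k) ^ 7, X 1 ^ 7} ^ 2 +
        Ideal.span {(X 2 : MvPolynomial (Fin 3) k) ^ 2} ^ 2 := by
  have hle : Ideal.span {(X 0 : MvPolynomial (Fin 3) k) ^ 7, X 1 ^ 7} ^ 2 +
      Ideal.span {(X 2 : MvPolynomial (Fin 3) k) ^ 2} ^ 2 ≤
      Ideal.span ((fun p => X p.1 ^ p.2) '' {((0 : Fin 3), 14), (1, 7), (2, 4)}) := by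
    rw [Set.image_insert_eq, Set.image_insert_eq, Set.image_singleton, Ideal.span_insert,
      Ideal.span_insert, Ideal.span_insert, Ideal.span_singleton_pow, Ideal.add_eq_sup, ← sup_assoc]
    refine sup_le_sup ((Ideal.sup_sq_le _ _).trans_eq ?_) (le_of_eq ?_)
    · rw [Ideal.span_singleton_pow, ← pow_mul]
    · rw [← pow_mul]
  have hmono : (X 0 : MvPolynomial (Fin 3) k) ^ 13 * X 1 ^ 6 * X 2 ^ 3 =
      monomial (Finsupp.single 0 13 + Finsupp.single 1 6 + Finsupp.single 2 3) 1 := by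
    simp only [X_pow_eq_monomial, monomial_mul, mul_one]
  rw [hmono]
  refine fun hmem => monomial_one_notMem_span_X_pow_image ?_ (hle hmem)
  simp [Finsupp.single_apply]

/-- **Example 6.4.**  In `k[x,y,z]` with `M = (x^7, y^7, x²y²z, z^5)^2`,
`P = (x^7, y^7)` and `Q = (z^2)`, one has `M^t ⊆ P^t + Q^t` for all positive
`t ≠ 2`, while `M^2 ⊄ P^2 + Q^2`, witnessed by
`x^{13} y^6 z^3 ∈ M^2 \ (P^2 + Q^2)`. -/
theorem stmt19 {k : Type*} [Field k] (M P Q : Ideal (MvPolynomial (Fin 3) k))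
    (hM : M = (Ideal.span {(X 0 : MvPolynomial (Fin 3) k) ^ 7, X 1 ^ 7,
      X 0 ^ 2 * X 1 ^ 2 * X 2, X 2 ^ 5}) ^ 2)
    (hP : P = Ideal.span {(X 0 : MvPolynomial (Fin 3) k) ^ 7, X 1 ^ 7})
    (hQ : Q = Ideal.span {(X 2 : MvPolynomial (Fin 3) k) ^ 2}) :
    (∀ t : ℕ, 1 ≤ t → t ≠ 2 → M ^ t ≤ P ^ t + Q ^ t) ∧
    ¬ M ^ 2 ≤ P ^ 2 + Q ^ 2 ∧
    (X 0 : MvPolynomial (Fin 3) k) ^ 13 * X 1 ^ 6 * X 2 ^ 3 ∈ M ^ 2 ∧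
    (X 0 : MvPolynomial (Fin 3) k) ^ 13 * X 1 ^ 6 * X 2 ^ 3 ∉ P ^ 2 + Q ^ 2 := by
  subst hM hP hQ
  have hmem := witness_mem_span_gens_sq_sq (X 0 : MvPolynomial (Fin 3) k) (X 1) (X 2)
  have hnotMem := witness_notMem_add (k := k)
  exact ⟨fun _ _ ht2 => span_gens_sq_pow_le _ _ _ ht2, fun hle => hnotMem (hle hmem), hmem,
    hnotMem⟩
end
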